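/- arXiv:2509.10160 — 4 statements merged into one kernel-verified Lean document; each statement's English description precedes it below -/
import Mathlib

section
/- For every n ≥ 3 and every set E of pairs {i,j} with 1 ≤ i < j ≤ n and j − i ≥ 2, the pair {1,n} belongs to the Catalan closure of E if and only if {1,n} ∈ E and there exists a set T ⊆ E \ {{1,n}} consisting of n − 3 pairwise noncrossing pairs (i.e., a triangulation of the convex polygon with vertices 1,…,n using diagonals from E). -/
/-- Two pairs `(a,b)` and `(c,d)` (with `a < b`, `c < d`) cross if
`a < c < b < d` or `c < a < d < b`. -/
def Crosses (e f : ℕ × ℕ) : Prop :=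
  (e.1 < f.1 ∧ f.1 < e.2 ∧ e.2 < f.2) ∨ (f.1 < e.1 ∧ e.1 < f.2 ∧ f.2 < e.2)

/-- The Catalan closure of the open edge set `E` on vertices `1, …, n`: the smallest set of
pairs containing all nearest-neighbour pairs `(i, i+1)` and closed under the rule that if
`(i,j)` and `(j,k)` are in the closure, `i < j < k`, and `(i,k) ∈ E`, then `(i,k)` is in the
closure. -/
inductive CatClosure (n : ℕ) (E : Set (ℕ × ℕ)) : ℕ × ℕ → Prop
  | base (i : ℕ) (h1 : 1 ≤ i) (h2 : i + 1 ≤ n) : CatClosure n E (i, i + 1)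
  | step (i j k : ℕ) (hij : i < j) (hjk : j < k)
      (h1 : CatClosure n E (i, j)) (h2 : CatClosure n E (j, k))
      (hE : (i, k) ∈ E) : CatClosure n E (i, k)


/-- Counting lemma: a noncrossing set of diagonals strictly inside `[a,b]`
(not containing the full chord `(a,b)`) has at most `b - a - 2` elements. -/
lemma noncross_card_le :
    ∀ fuel a b (S : Finset (ℕ × ℕ)), b - a ≤ fuel →
      (∀ e ∈ S, a ≤ e.1 ∧ e.1 < e.2 ∧ e.2 ≤ b ∧ 2 ≤ e.2 - e.1) →
      (∀ e ∈ S, ∀ f ∈ S, e ≠ f → ¬ Crosses e f) →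
      (a, b) ∉ S → S.card ≤ b - a - 2 := by
  intro fuel
  induction fuel using Nat.strong_induction_on with
  | _ fuel IH =>
  intro a b S hfuel hb hnc hab
  rcases S.eq_empty_or_nonempty with rfl | hne
  · simp
  have P : ∀ a' b' (S' : Finset (ℕ × ℕ)), b' - a' < fuel →
      (∀ e ∈ S', a' ≤ e.1 ∧ e.1 < e.2 ∧ e.2 ≤ b' ∧ 2 ≤ e.2 - e.1) →
      (∀ e ∈ S', ∀ f ∈ S', e ≠ f → ¬ Crosses e f) →
      S'.card ≤ b' - a' - 1 := by
    intro a' b' S' hlt hb' hnc'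
    by_cases hm : (a', b') ∈ S'
    · have h2 : 2 ≤ b' - a' := by have := hb' _ hm; simp at this; omega
      have hcard := Finset.card_erase_add_one hm
      have := IH (b' - a') hlt a' b' (S'.erase (a', b')) le_rfl
        (fun e he => hb' e (Finset.mem_of_mem_erase he))
        (fun e he f hf => hnc' e (Finset.mem_of_mem_erase he) f (Finset.mem_of_mem_erase hf))
        (Finset.notMem_erase _ _)
      omega
    · have := IH (b' - a') hlt a' b' S' le_rfl hb' hnc' hm
      omega
  obtain ⟨e, heS, hemax⟩ := S.exists_max_image (fun e => e.2 - e.1) hne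
  obtain ⟨hae, he12, heb, helen⟩ := hb e heS
  have hne_ab : ¬(e.1 = a ∧ e.2 = b) := by
    rintro ⟨h1, h2⟩
    exact hab (by rw [← h1, ← h2]; simpa using heS)
  have hcover : ∀ f ∈ S, f.2 ≤ e.1 ∨ (e.1 ≤ f.1 ∧ f.2 ≤ e.2) ∨ e.2 ≤ f.1 := by
    intro f hf
    by_cases hfe : f = e
    · subst hfe; right; left; exact ⟨le_rfl, le_rfl⟩
    · have h1 := hnc e heS f hf (fun h => hfe h.symm)
      have hmax := hemax f hf
      obtain ⟨haf, hf12, hfb, hflen⟩ := hb f hf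
      unfold Crosses at h1
      omega
  classical
  have hsub : S ⊆ (S.filter (fun f => f.2 ≤ e.1)) ∪
      (S.filter (fun f => e.1 ≤ f.1 ∧ f.2 ≤ e.2)) ∪ (S.filter (fun f => e.2 ≤ f.1)) := by
    intro f hf
    rcases hcover f hf with h | h | h
    · exact Finset.mem_union.mpr (Or.inl (Finset.mem_union.mpr (Or.inl
        (Finset.mem_filter.mpr ⟨hf, h⟩))))
    · exact Finset.mem_union.mpr (Or.inl (Finset.mem_union.mpr (Or.inr
        (Finset.mem_filter.mpr ⟨hf, h⟩))))
    · exact Finset.mem_union.mpr (Or.inr (Finset.mem_filter.mpr ⟨hf, h⟩))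
  have hA : (S.filter (fun f => f.2 ≤ e.1)).card ≤ e.1 - a - 1 := by
    apply P a e.1 _ (by omega)
    · intro f hf
      have := Finset.mem_filter.mp hf
      obtain ⟨h1, h2, h3, h4⟩ := hb f this.1
      exact ⟨h1, h2, this.2, h4⟩
    · intro x hx y hy; exact hnc x (Finset.filter_subset _ _ hx) y (Finset.filter_subset _ _ hy)
  have hB : (S.filter (fun f => e.1 ≤ f.1 ∧ f.2 ≤ e.2)).card ≤ e.2 - e.1 - 1 := by
    apply P e.1 e.2 _ (by omega)
    · intro f hf
      have := Finset.mem_filter.mp hf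
      obtain ⟨h1, h2, h3, h4⟩ := hb f this.1
      exact ⟨this.2.1, h2, this.2.2, h4⟩
    · intro x hx y hy; exact hnc x (Finset.filter_subset _ _ hx) y (Finset.filter_subset _ _ hy)
  have hC : (S.filter (fun f => e.2 ≤ f.1)).card ≤ b - e.2 - 1 := by
    apply P e.2 b _ (by omega)
    · intro f hf
      have := Finset.mem_filter.mp hf
      obtain ⟨h1, h2, h3, h4⟩ := hb f this.1
      exact ⟨this.2, h2, h3, h4⟩
    · intro x hx y hy; exact hnc x (Finset.filter_subset _ _ hx) y (Finset.filter_subset _ _ hy)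
  have := Finset.card_le_card hsub
  have h2 := Finset.card_union_le ((S.filter (fun f => f.2 ≤ e.1)) ∪
      (S.filter (fun f => e.1 ≤ f.1 ∧ f.2 ≤ e.2))) (S.filter (fun f => e.2 ≤ f.1))
  have h3 := Finset.card_union_le (S.filter (fun f => f.2 ≤ e.1))
      (S.filter (fun f => e.1 ≤ f.1 ∧ f.2 ≤ e.2))
  omega

lemma noncross_card_le' (a b : ℕ) (S : Finset (ℕ × ℕ))
    (hb : ∀ e ∈ S, a ≤ e.1 ∧ e.1 < e.2 ∧ e.2 ≤ b ∧ 2 ≤ e.2 - e.1)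
    (hnc : ∀ e ∈ S, ∀ f ∈ S, e ≠ f → ¬ Crosses e f) : S.card ≤ b - a - 1 := by
  by_cases hm : (a, b) ∈ S
  · have h2 : 2 ≤ b - a := by have := hb _ hm; simp at this; omega
    have hcard := Finset.card_erase_add_one hm
    have := noncross_card_le (b - a) a b (S.erase (a, b)) le_rfl
      (fun e he => hb e (Finset.mem_of_mem_erase he))
      (fun e he f hf => hnc e (Finset.mem_of_mem_erase he) f (Finset.mem_of_mem_erase hf))
      (Finset.notMem_erase _ _)
    omega
  · have := noncross_card_le (b - a) a b S le_rfl hb hnc hm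
    omega

lemma catClosure_fwd (n : ℕ) (E : Set (ℕ × ℕ)) (p : ℕ × ℕ) (h : CatClosure n E p) :
    ∃ S : Finset (ℕ × ℕ), ↑S ⊆ E ∧ S.card = p.2 - p.1 - 1 ∧
      (∀ e ∈ S, p.1 ≤ e.1 ∧ e.1 < e.2 ∧ e.2 ≤ p.2 ∧ 2 ≤ e.2 - e.1) ∧
      (∀ e ∈ S, ∀ f ∈ S, e ≠ f → ¬ Crosses e f) ∧
      (2 ≤ p.2 - p.1 → p ∈ S) := by
  classical
  induction h with
  | base i h1 h2 =>
      refine ⟨∅, by simp, by simp, by simp, by simp, ?_⟩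
      intro hx; simp at hx
  | step i j k hij hjk h1 h2 hEm ih1 ih2 =>
      obtain ⟨S1, hS1E, hS1c, hS1b, hS1nc, hS1m⟩ := ih1
      obtain ⟨S2, hS2E, hS2c, hS2b, hS2nc, hS2m⟩ := ih2
      simp only at hS1c hS1b hS1m hS2c hS2b hS2m
      have hb1 : ∀ e ∈ S1, i ≤ e.1 ∧ e.1 < e.2 ∧ e.2 ≤ j ∧ 2 ≤ e.2 - e.1 := hS1b
      have hb2 : ∀ e ∈ S2, j ≤ e.1 ∧ e.1 < e.2 ∧ e.2 ≤ k ∧ 2 ≤ e.2 - e.1 := hS2b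
      have hdisj : Disjoint S1 S2 := by
        rw [Finset.disjoint_left]
        intro e he1 he2
        have := hb1 e he1; have := hb2 e he2; omega
      have hik : (i, k) ∉ S1 ∪ S2 := by
        intro hm
        rcases Finset.mem_union.mp hm with hm | hm
        · have := hb1 _ hm; simp at this; omega
        · have := hb2 _ hm; simp at this; omega
      refine ⟨insert (i, k) (S1 ∪ S2), ?_, ?_, ?_, ?_, ?_⟩
      · intro x hx
        simp only [Finset.coe_insert, Set.mem_insert_iff, Finset.coe_union,
          Set.mem_union, Finset.mem_coe] at hx
        rcases hx with rfl | hx | hx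
        · exact hEm
        · exact hS1E hx
        · exact hS2E hx
      · rw [Finset.card_insert_of_notMem hik, Finset.card_union_of_disjoint hdisj]
        simp only
        omega
      · intro e he
        rcases Finset.mem_insert.mp he with rfl | he
        · simp only; omega
        · rcases Finset.mem_union.mp he with he | he
          · have := hb1 e he; simp only; omega
          · have := hb2 e he; simp only; omega
      · have hcross12 : ∀ e ∈ S1, ∀ f ∈ S2, ¬ Crosses e f := by
          intro e he f hf hc
          have := hb1 e he; have h' := hb2 f hf
          unfold Crosses at hc; omega
        have hcrossik : ∀ f ∈ S1 ∪ S2, ¬ Crosses (i, k) f ∧ ¬ Crosses f (i, k) := by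
          intro f hf
          have hfb : i ≤ f.1 ∧ f.1 < f.2 ∧ f.2 ≤ k := by
            rcases Finset.mem_union.mp hf with hf | hf
            · have := hb1 f hf; omega
            · have := hb2 f hf; omega
          constructor <;> (intro hc; unfold Crosses at hc; simp only at hc; omega)
        intro e he f hf hne
        rcases Finset.mem_insert.mp he with rfl | he
        · rcases Finset.mem_insert.mp hf with rfl | hf
          · exact absurd rfl hne
          · exact (hcrossik f hf).1
        · rcases Finset.mem_insert.mp hf with rfl | hf
          · exact (hcrossik e he).2
          · rcases Finset.mem_union.mp he with he' | he' <;>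
            rcases Finset.mem_union.mp hf with hf' | hf'
            · exact hS1nc e he' f hf' hne
            · exact hcross12 e he' f hf'
            · intro hc
              exact hcross12 f hf' e he' (by unfold Crosses at hc ⊢; tauto)
            · exact hS2nc e he' f hf' hne
      · intro _; exact Finset.mem_insert_self _ _

lemma catClosure_rev (n : ℕ) (E : Set (ℕ × ℕ)) :
    ∀ fuel a b, b - a ≤ fuel → 1 ≤ a → a < b → b ≤ n → ((a, b) ∈ E ∨ b = a + 1) →
      ∀ T : Finset (ℕ × ℕ), (∀ e ∈ T, e ∈ E) →
        (∀ e ∈ T, a ≤ e.1 ∧ e.1 < e.2 ∧ e.2 ≤ b ∧ 2 ≤ e.2 - e.1 ∧ e ≠ (a, b)) →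
        T.card = b - a - 2 →
        (∀ e ∈ T, ∀ f ∈ T, e ≠ f → ¬ Crosses e f) →
        CatClosure n E (a, b) := by
  classical
  intro fuel
  induction fuel using Nat.strong_induction_on with
  | _ fuel IH =>
  intro a b hfuel ha hab hbn hEor T hTE hTb hTc hTnc
  by_cases hb1 : b = a + 1
  · subst hb1; exact CatClosure.base a ha hbn
  · have hEm : (a, b) ∈ E := hEor.resolve_right hb1
    have hab2 : a + 2 ≤ b := by omega
    obtain ⟨j, haj, hjb, hjprop, hjmax⟩ :
        ∃ j, a < j ∧ j < b ∧ (j = a + 1 ∨ (a, j) ∈ T) ∧ (∀ e ∈ T, e.1 = a → e.2 ≤ j) := by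
      by_cases hS : (T.filter (fun e => e.1 = a)).Nonempty
      · obtain ⟨e, heS, hmax⟩ := (T.filter fun e => e.1 = a).exists_max_image (fun e => e.2) hS
        have heT : e ∈ T := (Finset.mem_filter.mp heS).1
        have he1 : e.1 = a := (Finset.mem_filter.mp heS).2
        obtain ⟨h1, h2, h3, h4, h5⟩ := hTb e heT
        have he2b : e.2 < b := by
          rcases lt_or_eq_of_le h3 with h | h
          · exact h
          · exact absurd (by rw [← he1, ← h] : e = (a, b)) h5
        refine ⟨e.2, by omega, he2b, Or.inr ?_, ?_⟩
        · have : (a, e.2) = e := by rw [← he1]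
          rw [this]; exact heT
        · intro f hf hf1
          exact hmax f (Finset.mem_filter.mpr ⟨hf, hf1⟩)
      · refine ⟨a + 1, by omega, by omega, Or.inl rfl, ?_⟩
        intro f hf hf1
        exact absurd ⟨f, Finset.mem_filter.mpr ⟨hf, hf1⟩⟩ hS
    have hsplit : ∀ e ∈ T, e.2 ≤ j ∨ j ≤ e.1 := by
      intro e heT
      obtain ⟨h1, h2, h3, h4, h5⟩ := hTb e heT
      by_cases hcase : e.1 = a
      · exact Or.inl (hjmax e heT hcase)
      · by_cases h6 : e.2 ≤ j
        · exact Or.inl h6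
        · by_cases h7 : j ≤ e.1
          · exact Or.inr h7
          · exfalso
            have hj2 : (a, j) ∈ T := by
              rcases hjprop with h | h
              · omega
              · exact h
            have hne : (a, j) ≠ e := by
              intro hq; apply hcase; rw [← hq]
            apply hTnc (a, j) hj2 e heT hne
            unfold Crosses; simp only; omega
    set L := T.filter (fun e => e.2 ≤ j) with hLdef
    set R := T.filter (fun e => ¬ (e.2 ≤ j)) with hRdef
    have hcardLR : L.card + R.card = T.card :=
      Finset.card_filter_add_card_filter_not (s := T) (fun e => e.2 ≤ j)
    have hLb : ∀ e ∈ L, a ≤ e.1 ∧ e.1 < e.2 ∧ e.2 ≤ j ∧ 2 ≤ e.2 - e.1 := by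
      intro e he
      have hm := Finset.mem_filter.mp he
      obtain ⟨h1, h2, h3, h4, h5⟩ := hTb e hm.1
      exact ⟨h1, h2, hm.2, h4⟩
    have hRb : ∀ e ∈ R, j ≤ e.1 ∧ e.1 < e.2 ∧ e.2 ≤ b ∧ 2 ≤ e.2 - e.1 := by
      intro e he
      have hm := Finset.mem_filter.mp he
      obtain ⟨h1, h2, h3, h4, h5⟩ := hTb e hm.1
      have := hsplit e hm.1
      exact ⟨by omega, h2, h3, h4⟩
    have hLnc : ∀ e ∈ L, ∀ f ∈ L, e ≠ f → ¬ Crosses e f := fun e he f hf =>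
      hTnc e (Finset.filter_subset _ _ he) f (Finset.filter_subset _ _ hf)
    have hRnc : ∀ e ∈ R, ∀ f ∈ R, e ≠ f → ¬ Crosses e f := fun e he f hf =>
      hTnc e (Finset.filter_subset _ _ he) f (Finset.filter_subset _ _ hf)
    have hLle : L.card ≤ j - a - 1 := noncross_card_le' a j L hLb hLnc
    have hRle : R.card ≤ b - j - 1 := noncross_card_le' j b R hRb hRnc
    have hLcard : L.card = j - a - 1 := by omega
    have hRcard : R.card = b - j - 1 := by omega
    have hcl : CatClosure n E (a, j) := by
      rcases hjprop with h | hT'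
      · subst h; exact CatClosure.base a ha (by omega)
      · obtain ⟨h1, h2, h3, h4, h5⟩ := hTb _ hT'
        simp only at h1 h2 h3 h4
        have hjmem : (a, j) ∈ L := Finset.mem_filter.mpr ⟨hT', le_rfl⟩
        have hcL := Finset.card_erase_of_mem hjmem
        refine IH (j - a) (by omega) a j le_rfl ha haj (by omega) (Or.inl (hTE _ hT'))
          (L.erase (a, j)) ?_ ?_ ?_ ?_
        · intro e he; exact hTE e (Finset.filter_subset _ _ (Finset.mem_of_mem_erase he))
        · intro e he
          have hne := Finset.ne_of_mem_erase he
          have := hLb e (Finset.mem_of_mem_erase he)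
          exact ⟨this.1, this.2.1, this.2.2.1, this.2.2.2, hne⟩
        · omega
        · intro e he f hf
          exact hLnc e (Finset.mem_of_mem_erase he) f (Finset.mem_of_mem_erase hf)
    have hcr : CatClosure n E (j, b) := by
      by_cases hjb1 : b = j + 1
      · subst hjb1; exact CatClosure.base j (by omega) hbn
      · have hjbR : (j, b) ∈ R := by
          by_contra hno
          have := noncross_card_le (b - j) j b R le_rfl hRb hRnc hno
          omega
        have hjbT : (j, b) ∈ T := (Finset.mem_filter.mp hjbR).1
        have hcR := Finset.card_erase_of_mem hjbR
        refine IH (b - j) (by omega) j b le_rfl (by omega) hjb hbn (Or.inl (hTE _ hjbT))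
          (R.erase (j, b)) ?_ ?_ ?_ ?_
        · intro e he; exact hTE e (Finset.filter_subset _ _ (Finset.mem_of_mem_erase he))
        · intro e he
          have hne := Finset.ne_of_mem_erase he
          have := hRb e (Finset.mem_of_mem_erase he)
          exact ⟨this.1, this.2.1, this.2.2.1, this.2.2.2, hne⟩
        · omega
        · intro e he f hf
          exact hRnc e (Finset.mem_of_mem_erase he) f (Finset.mem_of_mem_erase hf)
    exact CatClosure.step a j b haj hjb hcl hcr hEm

/-- For `n ≥ 3` and a set `E` of pairs `{i,j}` with `1 ≤ i < j ≤ n` and `j - i ≥ 2`, the pair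
`{1,n}` is in the Catalan closure of `E` iff `{1,n} ∈ E` and some `T ⊆ E \ {(1,n)}` consisting
of `n - 3` pairwise noncrossing diagonals triangulates the convex polygon on vertices
`1, …, n`. -/
theorem catClosure_top_iff_triangulation (n : ℕ) (hn : 3 ≤ n) (E : Set (ℕ × ℕ))
    (hE : ∀ e ∈ E, 1 ≤ e.1 ∧ e.1 < e.2 ∧ e.2 ≤ n ∧ 2 ≤ e.2 - e.1) :
    CatClosure n E (1, n) ↔
      (1, n) ∈ E ∧
        ∃ T : Finset (ℕ × ℕ), ↑T ⊆ E \ {(1, n)} ∧ T.card = n - 3 ∧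
          (∀ e ∈ T, 1 ≤ e.1 ∧ e.1 < e.2 ∧ e.2 ≤ n ∧ 2 ≤ e.2 - e.1 ∧ e.2 - e.1 ≤ n - 2) ∧
          (∀ e ∈ T, ∀ f ∈ T, e ≠ f → ¬ Crosses e f) := by
  classical
  constructor
  · intro h
    obtain ⟨S, hSE, hSc, hSb, hSnc, hSm⟩ := catClosure_fwd n E (1, n) h
    simp only at hSc hSb hSm
    have h1n : (1, n) ∈ S := hSm (by omega)
    have h1nE : (1, n) ∈ E := hSE h1n
    refine ⟨h1nE, S.erase (1, n), ?_, ?_, ?_, ?_⟩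
    · intro x hx
      have hx' := Finset.mem_coe.mp hx
      refine ⟨hSE (Finset.mem_of_mem_erase hx'), ?_⟩
      simpa using Finset.ne_of_mem_erase hx'
    · rw [Finset.card_erase_of_mem h1n]; omega
    · intro e he
      have hne := Finset.ne_of_mem_erase he
      obtain ⟨h1, h2, h3, h4⟩ := hSb e (Finset.mem_of_mem_erase he)
      have : ¬(e.1 = 1 ∧ e.2 = n) := by
        rintro ⟨ha, hb⟩; exact hne (by rw [← ha, ← hb])
      refine ⟨h1, h2, h3, h4, by omega⟩
    · intro e he f hf
      exact hSnc e (Finset.mem_of_mem_erase he) f (Finset.mem_of_mem_erase hf)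
  · rintro ⟨h1nE, T, hTsub, hTc, hTb, hTnc⟩
    refine catClosure_rev n E (n - 1) 1 n (by omega) le_rfl (by omega) le_rfl
      (Or.inl h1nE) T ?_ ?_ (by omega) hTnc
    · intro e he; exact (hTsub (Finset.mem_coe.mpr he)).1
    · intro e he
      obtain ⟨h1, h2, h3, h4, h5⟩ := hTb e he
      have hne : e ≠ (1, n) := by simpa using (hTsub (Finset.mem_coe.mpr he)).2
      exact ⟨h1, h2, h3, h4, hne⟩
end

section
/- Let p : ℤ → [0,1] be a finitely supported probability distribution, and let ν, μ be positive integers with p(−ν) > 0, p(μ) > 0, and p(k) = 0 for k < −ν or k > μ. Suppose the mean Σ_k k·p(k) is strictly negative. Then there exists a unique real α* > 0 with α* ≠ 1 satisfying the characteristic equation Σ_k α*^k · p(k) = 1, and moreover α* > 1. -/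
private lemma strictConvexOn_mul_const' {f : ℝ → ℝ} {c : ℝ} (hc : 0 < c)
    (hf : StrictConvexOn ℝ (Set.Ioi 0) f) :
    StrictConvexOn ℝ (Set.Ioi 0) fun x => f x * c := by
  refine ⟨hf.1, fun x hx y hy hxy a b ha hb hab => ?_⟩
  have key := hf.2 hx hy hxy ha hb hab
  simp only [smul_eq_mul] at key ⊢
  nlinarith [mul_lt_mul_of_pos_right key hc]

private lemma convexOn_finset_sum' {ι : Type*} (s : Finset ι) (f : ι → ℝ → ℝ)
    (h : ∀ i ∈ s, ConvexOn ℝ (Set.Ioi 0) (f i)) :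
    ConvexOn ℝ (Set.Ioi 0) (fun x => ∑ i ∈ s, f i x) := by
  classical
  induction s using Finset.induction with
  | empty => simpa using convexOn_const 0 (convex_Ioi (0 : ℝ))
  | insert _ _ hi ih =>
    simp only [Finset.sum_insert hi]
    exact (h _ (Finset.mem_insert_self _ _)).add
      (ih fun i hi' => h i (Finset.mem_insert_of_mem hi'))

private lemma no_three_roots' {f : ℝ → ℝ} (hf : StrictConvexOn ℝ (Set.Ioi 0) f)
    {a b c : ℝ} (ha : 0 < a) (hab : a < b) (hbc : b < c)
    (h1 : f b = f a) (h2 : f c = f a) : False := by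
  have hb : 0 < b := ha.trans hab
  have hc0 : 0 < c := hb.trans hbc
  have hac : a ≠ c := by linarith
  have hca : 0 < c - a := by linarith
  set t : ℝ := (c - b) / (c - a) with htdef
  set s : ℝ := (b - a) / (c - a) with hsdef
  have ht : 0 < t := div_pos (by linarith) hca
  have hs : 0 < s := div_pos (by linarith) hca
  have hts : t + s = 1 := by
    rw [htdef, hsdef]; field_simp; ring
  have key := hf.2 (Set.mem_Ioi.mpr ha) (Set.mem_Ioi.mpr hc0) hac ht hs hts
  have hb' : t • a + s • c = b := by
    simp only [smul_eq_mul, htdef, hsdef]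
    field_simp; ring
  rw [hb'] at key
  simp only [smul_eq_mul] at key
  rw [h1, h2] at key
  have : t * f a + s * f a = f a := by rw [← add_mul, hts, one_mul]
  linarith

/-- Let `p : ℤ → [0,1]` be a probability distribution supported on `[-ν, μ]` with
`p (-ν) > 0`, `p μ > 0` and strictly negative mean. Then there is a unique `α* > 0`
with `α* ≠ 1` satisfying the characteristic equation `Σ_k α*^k p(k) = 1`, and
moreover `α* > 1`. -/
theorem exists_unique_characteristic_root (p : ℤ → ℝ) (ν μ : ℕ)
    (hν : 0 < ν) (hμ : 0 < μ)
    (hp0 : ∀ k, 0 ≤ p k) (hp1 : ∀ k, p k ≤ 1)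
    (hsupp : ∀ k : ℤ, (k < -(ν : ℤ) ∨ (μ : ℤ) < k) → p k = 0)
    (hsum : ∑ k ∈ Finset.Icc (-(ν : ℤ)) (μ : ℤ), p k = 1)
    (hpν : 0 < p (-(ν : ℤ))) (hpμ : 0 < p (μ : ℤ))
    (hmean : ∑ k ∈ Finset.Icc (-(ν : ℤ)) (μ : ℤ), (k : ℝ) * p k < 0) :
    ∃ α : ℝ, (0 < α ∧ α ≠ 1 ∧ ∑ k ∈ Finset.Icc (-(ν : ℤ)) (μ : ℤ), α ^ k * p k = 1) ∧
      1 < α ∧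
      ∀ β : ℝ, 0 < β → β ≠ 1 →
        (∑ k ∈ Finset.Icc (-(ν : ℤ)) (μ : ℤ), β ^ k * p k = 1) → β = α := by
  classical
  set f : ℝ → ℝ := fun x => ∑ k ∈ Finset.Icc (-(ν : ℤ)) (μ : ℤ), x ^ k * p k with hfdef
  have hmemν : (-(ν : ℤ)) ∈ Finset.Icc (-(ν : ℤ)) (μ : ℤ) := by
    rw [Finset.mem_Icc]; omega
  have hmemμ : ((μ : ℤ)) ∈ Finset.Icc (-(ν : ℤ)) (μ : ℤ) := by
    rw [Finset.mem_Icc]; omega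
  -- strict convexity
  have hconv : ∀ k : ℤ, ConvexOn ℝ (Set.Ioi 0) fun x : ℝ => x ^ k * p k := by
    intro k
    have := (convexOn_zpow (𝕜 := ℝ) k).smul (hp0 k)
    simpa only [smul_eq_mul, mul_comm] using this
  have hsc : StrictConvexOn ℝ (Set.Ioi 0) f := by
    have hsplit : f = fun x =>
        (∑ k ∈ (Finset.Icc (-(ν : ℤ)) (μ : ℤ)).erase (-(ν : ℤ)), x ^ k * p k)
          + x ^ (-(ν : ℤ)) * p (-(ν : ℤ)) := by
      funext x
      show (∑ k ∈ Finset.Icc (-(ν : ℤ)) (μ : ℤ), x ^ k * p k) = _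
      exact (Finset.sum_erase_add _ _ hmemν).symm
    rw [hsplit]
    refine ConvexOn.add_strictConvexOn ?_ ?_
    · exact convexOn_finset_sum' _ _ fun k _ => hconv k
    · refine strictConvexOn_mul_const' hpν (strictConvexOn_zpow ?_ ?_) <;> omega
  -- value at 1
  have hf1 : f 1 = 1 := by
    rw [hfdef]
    simpa [one_zpow] using hsum
  -- derivative at 1
  have hderiv : HasDerivAt f (∑ k ∈ Finset.Icc (-(ν : ℤ)) (μ : ℤ), (k : ℝ) * p k) 1 := by
    apply HasDerivAt.fun_sum
    intro k _
    have h := (hasDerivAt_zpow k (1 : ℝ) (Or.inl one_ne_zero)).mul_const (p k)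
    simpa using h
  -- a point x0 > 1 with f x0 < 1
  have hslope := hasDerivAt_iff_tendsto_slope.mp hderiv
  have hev : ∀ᶠ x in nhdsWithin (1 : ℝ) (Set.Ioi 1), slope f 1 x < 0 := by
    have h1 : ∀ᶠ x in nhdsWithin (1 : ℝ) {(1 : ℝ)}ᶜ, slope f 1 x < 0 :=
      hslope.eventually (Iio_mem_nhds hmean)
    exact h1.filter_mono (nhdsWithin_mono 1 (fun x hx => by
      simp only [Set.mem_compl_iff, Set.mem_singleton_iff]
      exact ne_of_gt hx))
  have hev2 : ∀ᶠ x in nhdsWithin (1 : ℝ) (Set.Ioi 1), (1 : ℝ) < x :=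
    eventually_mem_nhdsWithin
  obtain ⟨x0, hx0s, hx0gt⟩ := (hev.and hev2).exists
  have hfx0 : f x0 < 1 := by
    rw [slope_def_field] at hx0s
    have hx1 : 0 < x0 - 1 := by linarith
    rcases div_neg_iff.mp hx0s with ⟨h1, h2⟩ | ⟨h1, h2⟩
    · linarith
    · linarith
  -- a point M with f M ≥ 2
  set M : ℝ := max x0 (2 / p (μ : ℤ)) with hMdef
  have hx0M : x0 ≤ M := le_max_left _ _
  have hM1 : 1 < M := lt_of_lt_of_le hx0gt hx0M
  have hMpos : 0 < M := by linarith
  have hfM : 2 ≤ f M := by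
    have hsingle : M ^ ((μ : ℤ)) * p (μ : ℤ) ≤ f M := by
      rw [hfdef]
      exact Finset.single_le_sum (f := fun k => M ^ k * p k)
        (fun k _ => mul_nonneg (zpow_nonneg hMpos.le k) (hp0 k)) hmemμ
    have hMpow : M ≤ M ^ ((μ : ℤ)) := by
      rw [zpow_natCast]
      calc M = M ^ 1 := (pow_one M).symm
        _ ≤ M ^ μ := pow_le_pow_right₀ hM1.le hμ
    have h2M : 2 ≤ M * p (μ : ℤ) := by
      have := le_max_right x0 (2 / p (μ : ℤ))
      rw [div_le_iff₀ hpμ] at this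
      linarith
    have := mul_le_mul_of_nonneg_right hMpow (hp0 (μ : ℤ))
    linarith
  -- IVT
  have hcont : ContinuousOn f (Set.Icc x0 M) := by
    rw [hfdef]
    apply continuousOn_finset_sum
    intro k _
    refine ContinuousOn.mul ?_ continuousOn_const
    refine (continuousOn_zpow₀ k).mono fun x hx => ?_
    simp only [Set.mem_compl_iff, Set.mem_singleton_iff]
    have : (1 : ℝ) < x := lt_of_lt_of_le hx0gt hx.1
    linarith
  obtain ⟨α, hαmem, hfα⟩ := intermediate_value_Icc hx0M hcont ⟨hfx0.le, by linarith⟩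
  have hα1 : 1 < α := lt_of_lt_of_le hx0gt hαmem.1
  have hα0 : 0 < α := by linarith
  refine ⟨α, ⟨hα0, hα1.ne', hfα⟩, hα1, ?_⟩
  intro β hβ0 hβ1 hfβ'
  have hfβ : f β = 1 := hfβ'
  by_contra hne
  rcases hβ1.lt_or_gt with h | h
  · exact no_three_roots' hsc hβ0 h hα1 (hf1.trans hfβ.symm) (hfα.trans hfβ.symm)
  · rcases lt_trichotomy β α with h2 | h2 | h2
    · exact no_three_roots' hsc one_pos h h2 (hfβ.trans hf1.symm) (hfα.trans hf1.symm)
    · exact hne h2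
    · exact no_three_roots' hsc one_pos hα1 h2 (hfα.trans hf1.symm) (hfβ.trans hf1.symm)
end

section
/- Let (X_t)_{t≥0} be a random walk on ℤ with i.i.d. increments distributed according to a finitely supported probability distribution p : ℤ → [0,1] with p(−ν) > 0, p(μ) > 0 for positive integers ν, μ, p(k) = 0 for k outside [−ν, μ], and strictly negative mean Σ_k k·p(k) < 0. Let α* > 1 be the unique α ≠ 1 solving Σ_k α^k p(k) = 1. For integers 0 < x < J, let φ(x,J) denote the probability that the walk started at X_0 = x reaches a value ≥ J strictly before reaching a value ≤ 0. Then (α*^x − 1)/(α*^{J+μ−1} − 1) ≤ φ(x,J) ≤ (α*^{x+ν−1} − 1)/(α*^{J+ν−1} − 1). -/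
open MeasureTheory ProbabilityTheory

/-- `walk ξ x t ω` is the position after `t` steps of the random walk started at `x`
with increments `ξ 0, ξ 1, …`. -/
def walk {Ω : Type*} (ξ : ℕ → Ω → ℤ) (x : ℕ) (t : ℕ) (ω : Ω) : ℤ :=
  (x : ℤ) + ∑ s ∈ Finset.range t, ξ s ω

/-- `phi P ξ x J` is the probability that the random walk started at `x` with increments `ξ`
reaches a value `≥ J` strictly before reaching a value `≤ 0` (i.e. its jackpot time is
strictly smaller than its ruin time). -/
noncomputable def phi {Ω : Type*} [MeasurableSpace Ω] (P : Measure Ω)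
    (ξ : ℕ → Ω → ℤ) (x J : ℕ) : ℝ :=
  (P {ω | ∃ t : ℕ, (J : ℤ) ≤ walk ξ x t ω ∧ ∀ s ≤ t, 0 < walk ξ x s ω}).toReal

namespace GRB

/-- extend a finite tuple of increments by zeros -/
def ext {T : ℕ} (f : Fin T → ℤ) (s : ℕ) : ℤ := if h : s < T then f ⟨s, h⟩ else 0

/-- position after `t` steps (frozen after `T`) -/
def posf (x : ℕ) {T : ℕ} (f : Fin T → ℤ) (t : ℕ) : ℤ :=
  (x : ℤ) + ∑ s ∈ Finset.range (min t T), ext f s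

lemma posf_zero (x : ℕ) {T : ℕ} (f : Fin T → ℤ) : posf x f 0 = x := by simp [posf]

lemma posf_succ (x : ℕ) {T : ℕ} (f : Fin T → ℤ) {s : ℕ} (hs : s < T) :
    posf x f (s + 1) = posf x f s + ext f s := by
  have h1 : min (s + 1) T = s + 1 := by omega
  have h2 : min s T = s := by omega
  simp [posf, h1, h2, Finset.sum_range_succ, add_assoc]

lemma posf_freeze (x : ℕ) {T : ℕ} (f : Fin T → ℤ) {t : ℕ} (ht : T ≤ t) :
    posf x f t = posf x f T := by
  simp [posf, min_eq_right ht, min_self]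

/-- the stopping predicate: horizon reached or exit from `(0,J)` -/
def stopP (x J : ℕ) {T : ℕ} (f : Fin T → ℤ) (t : ℕ) : Prop :=
  T ≤ t ∨ (J : ℤ) ≤ posf x f t ∨ posf x f t ≤ 0

instance (x J : ℕ) {T : ℕ} (f : Fin T → ℤ) : DecidablePred (stopP x J f) := by
  intro t; unfold stopP; infer_instance

lemma stopP_exists (x J : ℕ) {T : ℕ} (f : Fin T → ℤ) : ∃ t, stopP x J f t :=
  ⟨T, Or.inl le_rfl⟩

/-- stopping time -/
def stopT (x J : ℕ) {T : ℕ} (f : Fin T → ℤ) : ℕ := Nat.find (stopP_exists x J f)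

/-- stopped value -/
def sv (x J : ℕ) {T : ℕ} (f : Fin T → ℤ) : ℤ := posf x f (stopT x J f)

lemma stopT_le (x J : ℕ) {T : ℕ} (f : Fin T → ℤ) : stopT x J f ≤ T :=
  Nat.find_le (Or.inl le_rfl)

lemma stopT_interior (x J : ℕ) {T : ℕ} (f : Fin T → ℤ) {s : ℕ} (hs : s < stopT x J f) :
    0 < posf x f s ∧ posf x f s < J := by
  have h := Nat.find_min (stopP_exists x J f) hs
  unfold stopP at h
  push_neg at h
  exact ⟨by omega, by omega⟩

lemma stopT_spec (x J : ℕ) {T : ℕ} (f : Fin T → ℤ) : stopP x J f (stopT x J f) :=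
  Nat.find_spec (stopP_exists x J f)

/-- staying strictly inside `(0, J)` through the whole horizon -/
def alive (x J : ℕ) {T : ℕ} (f : Fin T → ℤ) : Prop :=
  ∀ t ≤ T, 0 < posf x f t ∧ posf x f t < (J : ℤ)

lemma alive_stopT (x J : ℕ) {T : ℕ} (f : Fin T → ℤ) (h : alive x J f) :
    stopT x J f = T := by
  have hle := stopT_le x J f
  rcases stopT_spec x J f with h1 | h2 | h3
  · omega
  · have := (h _ hle).2; omega
  · have := (h _ hle).1; omega

lemma alive_sv (x J : ℕ) {T : ℕ} (f : Fin T → ℤ) (h : alive x J f) :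
    sv x J f = posf x f T := by rw [sv, alive_stopT x J f h]

lemma exit_of_not_alive (x J : ℕ) {T : ℕ} (f : Fin T → ℤ) (h : ¬ alive x J f) :
    (J : ℤ) ≤ sv x J f ∨ sv x J f ≤ 0 := by
  unfold alive at h
  push_neg at h
  obtain ⟨t, htT, ht⟩ := h
  have hexit : (J : ℤ) ≤ posf x f t ∨ posf x f t ≤ 0 := by
    by_cases h0 : 0 < posf x f t
    · exact Or.inl (ht h0)
    · exact Or.inr (by omega)
  have hstop : stopP x J f t := Or.inr hexit
  have hfind : stopT x J f ≤ t := Nat.find_le hstop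
  rcases stopT_spec x J f with h1 | h2 | h3
  · have hTt : stopT x J f = T := le_antisymm (stopT_le x J f) h1
    have htT' : t = stopT x J f := by omega
    rw [sv, ← htT']
    exact hexit
  · exact Or.inl h2
  · exact Or.inr h3

/-- equivalence of the `sv`-based top-exit predicate with the event-form predicate -/
lemma top_iff (x J : ℕ) (hJ : 0 < J) {T : ℕ} (f : Fin T → ℤ) :
    (J : ℤ) ≤ sv x J f ↔
      ∃ t ≤ T, (J : ℤ) ≤ posf x f t ∧ ∀ s ≤ t, 0 < posf x f s := by
  constructor
  · intro h
    refine ⟨stopT x J f, stopT_le x J f, h, ?_⟩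
    intro s hs
    rcases lt_or_eq_of_le hs with hs' | hs'
    · exact (stopT_interior x J f hs').1
    · subst hs'
      have hJ' : (0:ℤ) < J := by exact_mod_cast hJ
      calc (0:ℤ) < J := hJ'
        _ ≤ sv x J f := h
  · rintro ⟨t, htT, hJt, hpos⟩
    have hstop : stopP x J f t := Or.inr (Or.inl hJt)
    have hfind : stopT x J f ≤ t := Nat.find_le hstop
    rcases stopT_spec x J f with h1 | h2 | h3
    · have h4 : stopT x J f = T := le_antisymm (stopT_le x J f) h1
      have h5 : t = stopT x J f := by omega
      unfold sv; rw [← h5]; exact hJt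
    · exact h2
    · exfalso
      have := hpos _ hfind
      omega

/-- weight of a path -/
def wgt (p : ℤ → ℝ) {T : ℕ} (f : Fin T → ℤ) : ℝ := ∏ i, p (f i)

/-- the support interval as a finset -/
noncomputable def SS (ν μ : ℕ) : Finset ℤ := Finset.Icc (-(ν : ℤ)) (μ : ℤ)

/-- all paths of length `T` with increments in the support -/
noncomputable def PF (ν μ T : ℕ) : Finset (Fin T → ℤ) := Fintype.piFinset fun _ => SS ν μ

lemma ext_snoc_lt {T : ℕ} (g : Fin T → ℤ) (k : ℤ) {s : ℕ} (hs : s < T) :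
    ext (Fin.snoc g k : Fin (T + 1) → ℤ) s = ext g s := by
  have h1 : s < T + 1 := by omega
  have heq : (⟨s, h1⟩ : Fin (T + 1)) = Fin.castSucc ⟨s, hs⟩ := by
    apply Fin.ext; simp
  unfold ext
  rw [dif_pos h1, dif_pos hs, heq, Fin.snoc_castSucc]

lemma ext_snoc_last {T : ℕ} (g : Fin T → ℤ) (k : ℤ) :
    ext (Fin.snoc g k : Fin (T + 1) → ℤ) T = k := by
  have h1 : T < T + 1 := by omega
  have : (⟨T, h1⟩ : Fin (T + 1)) = Fin.last T := rfl
  simp [ext, h1, this, Fin.snoc_last]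

lemma posf_snoc (x : ℕ) {T : ℕ} (g : Fin T → ℤ) (k : ℤ) {t : ℕ} (ht : t ≤ T) :
    posf x (Fin.snoc g k : Fin (T + 1) → ℤ) t = posf x g t := by
  unfold posf
  have h1 : min t (T + 1) = t := by omega
  have h2 : min t T = t := by omega
  rw [h1, h2]
  congr 1
  exact Finset.sum_congr rfl fun s hs => ext_snoc_lt g k (by
    have := Finset.mem_range.mp hs; omega)

lemma posf_snoc_top (x : ℕ) {T : ℕ} (g : Fin T → ℤ) (k : ℤ) :
    posf x (Fin.snoc g k : Fin (T + 1) → ℤ) (T + 1) = posf x g T + k := by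
  unfold posf
  have h1 : min (T + 1) (T + 1) = T + 1 := by omega
  have h2 : min T T = T := by omega
  rw [h1, h2, Finset.sum_range_succ, ext_snoc_last]
  have : ∀ s ∈ Finset.range T, ext (Fin.snoc g k : Fin (T+1) → ℤ) s = ext g s :=
    fun s hs => ext_snoc_lt g k (Finset.mem_range.mp hs)
  rw [Finset.sum_congr rfl this]
  ring

lemma sv_snoc_of_alive (x J : ℕ) {T : ℕ} (g : Fin T → ℤ) (k : ℤ) (h : alive x J g) :
    sv x J (Fin.snoc g k : Fin (T + 1) → ℤ) = posf x g T + k := by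
  have hstop : stopT x J (Fin.snoc g k : Fin (T + 1) → ℤ) = T + 1 := by
    apply le_antisymm (stopT_le _ _ _)
    by_contra hc
    push_neg at hc
    have h2 := stopT_spec x J (Fin.snoc g k : Fin (T + 1) → ℤ)
    set t := stopT x J (Fin.snoc g k : Fin (T + 1) → ℤ) with ht
    have htT : t ≤ T := by omega
    unfold stopP at h2
    rw [posf_snoc x g k htT] at h2
    rcases h2 with h' | h' | h'
    · omega
    · have := (h t htT).2; omega
    · have := (h t htT).1; omega
  rw [sv, hstop, posf_snoc_top]

lemma sv_snoc_of_not_alive (x J : ℕ) {T : ℕ} (g : Fin T → ℤ) (k : ℤ) (h : ¬ alive x J g) :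
    sv x J (Fin.snoc g k : Fin (T + 1) → ℤ) = sv x J g := by
  set t0 := stopT x J g with ht0
  have ht0T : t0 ≤ T := stopT_le x J g
  have hexit : (J : ℤ) ≤ posf x g t0 ∨ posf x g t0 ≤ 0 := exit_of_not_alive x J g h
  have hstop : stopT x J (Fin.snoc g k : Fin (T + 1) → ℤ) = t0 := by
    apply le_antisymm
    · apply Nat.find_le
      right
      rw [posf_snoc x g k ht0T]
      exact hexit
    · by_contra hc
      push_neg at hc
      set t1 := stopT x J (Fin.snoc g k : Fin (T + 1) → ℤ) with ht1
      have h2 := stopT_spec x J (Fin.snoc g k : Fin (T + 1) → ℤ)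
      have ht1T : t1 ≤ T := by omega
      rw [← ht1] at h2
      unfold stopP at h2
      rw [posf_snoc x g k ht1T] at h2
      have hint := stopT_interior x J g (show t1 < t0 from hc)
      rcases h2 with h' | h' | h' <;> omega
  rw [sv, hstop, posf_snoc x g k ht0T]
  rfl

lemma snoc_mem_PF {ν μ T : ℕ} {g : Fin T → ℤ} {k : ℤ}
    (hg : g ∈ PF ν μ T) (hk : k ∈ SS ν μ) :
    (Fin.snoc g k : Fin (T + 1) → ℤ) ∈ PF ν μ (T + 1) := by
  rw [PF, Fintype.mem_piFinset]
  intro i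
  refine Fin.lastCases ?_ ?_ i
  · rw [Fin.snoc_last]; exact hk
  · intro j; rw [Fin.snoc_castSucc]; exact (Fintype.mem_piFinset.mp hg) j

lemma wgt_snoc (p : ℤ → ℝ) {T : ℕ} (g : Fin T → ℤ) (k : ℤ) :
    wgt p (Fin.snoc g k : Fin (T + 1) → ℤ) = wgt p g * p k := by
  unfold wgt
  rw [Fin.prod_univ_castSucc]
  simp [Fin.snoc_castSucc, Fin.snoc_last]

/-- summing over paths of length `T+1` by splitting off the last step -/
lemma sum_PF_succ {M : Type*} [AddCommMonoid M] (ν μ T : ℕ) (F : (Fin (T + 1) → ℤ) → M) :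
    ∑ f ∈ PF ν μ (T + 1), F f = ∑ g ∈ PF ν μ T, ∑ k ∈ SS ν μ, F (Fin.snoc g k) := by
  rw [← Finset.sum_product']
  apply Finset.sum_nbij' (fun f => (Fin.init f, f (Fin.last T))) (fun gk => Fin.snoc gk.1 gk.2)
  · intro f hf
    rw [Finset.mem_product]
    rw [PF, Fintype.mem_piFinset] at hf
    constructor
    · rw [PF, Fintype.mem_piFinset]; intro j; exact hf _
    · exact hf _
  · intro gk hgk
    rw [Finset.mem_product] at hgk
    exact snoc_mem_PF hgk.1 hgk.2
  · intro f _; exact Fin.snoc_init_self f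
  · intro gk _; simp [Fin.init_snoc, Fin.snoc_last]
  · intro f _; rw [Fin.snoc_init_self]

lemma sum_wgt (p : ℤ → ℝ) {ν μ : ℕ} (hsum : ∑ k ∈ SS ν μ, p k = 1) (T : ℕ) :
    ∑ f ∈ PF ν μ T, wgt p f = 1 := by
  rw [PF]
  unfold wgt
  rw [← Finset.prod_univ_sum]
  simp [hsum]

section Mart

variable {p : ℤ → ℝ} {ν μ x J : ℕ} {α : ℝ}

/-- the martingale identity for the stopped exponential walk -/
lemma MW_eq (hα : 0 < α) (hsum : ∑ k ∈ SS ν μ, p k = 1)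
    (hchar : ∑ k ∈ SS ν μ, α ^ k * p k = 1) :
    ∀ T, ∑ f ∈ PF ν μ T, wgt p f * α ^ sv x J f = α ^ (x : ℤ) := by
  intro T
  induction T with
  | zero =>
    have hcard : ∀ f ∈ PF ν μ 0, wgt p f * α ^ sv x J f = α ^ (x : ℤ) := by
      intro f _
      have h1 : wgt p f = 1 := by
        unfold wgt
        rw [Finset.univ_eq_empty, Finset.prod_empty]
      have h2 : sv x J f = x := by
        have h0 := stopT_le x J f
        have : stopT x J f = 0 := by omega
        rw [sv, this, posf_zero]
      rw [h1, h2, one_mul]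
    rw [Finset.sum_congr rfl hcard]
    rw [Finset.sum_const]
    have : (PF ν μ 0).card = 1 := by
      rw [PF, Fintype.card_piFinset]
      simp
    rw [this, one_smul]
  | succ T ih =>
    rw [sum_PF_succ]
    have hkey : ∀ g ∈ PF ν μ T,
        ∑ k ∈ SS ν μ, wgt p (Fin.snoc g k : Fin (T+1) → ℤ) *
          α ^ sv x J (Fin.snoc g k : Fin (T+1) → ℤ) = wgt p g * α ^ sv x J g := by
      intro g _
      by_cases hal : alive x J g
      · have : ∀ k ∈ SS ν μ, wgt p (Fin.snoc g k : Fin (T+1) → ℤ) *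
            α ^ sv x J (Fin.snoc g k : Fin (T+1) → ℤ)
            = wgt p g * α ^ posf x g T * (α ^ k * p k) := by
          intro k _
          rw [wgt_snoc, sv_snoc_of_alive x J g k hal,
            zpow_add₀ (ne_of_gt hα)]
          ring
        rw [Finset.sum_congr rfl this, ← Finset.mul_sum, hchar, mul_one,
          alive_sv x J g hal]
      · have : ∀ k ∈ SS ν μ, wgt p (Fin.snoc g k : Fin (T+1) → ℤ) *
            α ^ sv x J (Fin.snoc g k : Fin (T+1) → ℤ)
            = wgt p g * α ^ sv x J g * p k := by
          intro k _
          rw [wgt_snoc, sv_snoc_of_not_alive x J g k hal]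
          ring
        rw [Finset.sum_congr rfl this, ← Finset.mul_sum, hsum, mul_one]
    rw [Finset.sum_congr rfl hkey, ih]

/-- bounds on the stopped value in the three cases -/
lemma sv_top_bounds (hx : 0 < x) (hxJ : x < J) {T : ℕ} {f : Fin T → ℤ}
    (hf : f ∈ PF ν μ T) (h : (J : ℤ) ≤ sv x J f) :
    sv x J f ≤ (J : ℤ) - 1 + μ := by
  set t0 := stopT x J f with ht0
  have ht0T : t0 ≤ T := stopT_le x J f
  have ht0pos : t0 ≠ 0 := by
    intro hc
    rw [sv, ← ht0, hc, posf_zero] at h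
    omega
  obtain ⟨s, hs⟩ : ∃ s, t0 = s + 1 := ⟨t0 - 1, by omega⟩
  have hsT : s < T := by omega
  have hint : 0 < posf x f s ∧ posf x f s < J := stopT_interior x J f (by omega)
  have hstep : posf x f (s + 1) = posf x f s + ext f s := posf_succ x f hsT
  have hext : ext f s ≤ (μ : ℤ) := by
    have := (Fintype.mem_piFinset.mp hf) ⟨s, hsT⟩
    rw [SS, Finset.mem_Icc] at this
    unfold ext
    rw [dif_pos hsT]
    exact this.2
  rw [sv, ← ht0, hs]
  omega

lemma sv_bot_bounds (hx : 0 < x) (hxJ : x < J) {T : ℕ} {f : Fin T → ℤ}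
    (hf : f ∈ PF ν μ T) (h : sv x J f ≤ 0) :
    1 - (ν : ℤ) ≤ sv x J f := by
  set t0 := stopT x J f with ht0
  have ht0T : t0 ≤ T := stopT_le x J f
  have ht0pos : t0 ≠ 0 := by
    intro hc
    rw [sv, ← ht0, hc, posf_zero] at h
    omega
  obtain ⟨s, hs⟩ : ∃ s, t0 = s + 1 := ⟨t0 - 1, by omega⟩
  have hsT : s < T := by omega
  have hint : 0 < posf x f s ∧ posf x f s < J := stopT_interior x J f (by omega)
  have hstep : posf x f (s + 1) = posf x f s + ext f s := posf_succ x f hsT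
  have hext : -(ν : ℤ) ≤ ext f s := by
    have := (Fintype.mem_piFinset.mp hf) ⟨s, hsT⟩
    rw [SS, Finset.mem_Icc] at this
    unfold ext
    rw [dif_pos hsT]
    exact this.1
  rw [sv, ← ht0, hs]
  omega

end Mart

section Parts

open scoped Classical

variable (p : ℤ → ℝ) (ν μ x J : ℕ)

/-- weight of top-exit paths -/
noncomputable def qwt (T : ℕ) : ℝ :=
  ∑ f ∈ (PF ν μ T).filter (fun f => (J : ℤ) ≤ sv x J f), wgt p f

/-- weight of bottom-exit paths -/
noncomputable def bwt (T : ℕ) : ℝ :=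
  ∑ f ∈ (PF ν μ T).filter (fun f => sv x J f ≤ 0), wgt p f

/-- weight of paths still strictly inside `(0,J)` -/
noncomputable def awt (T : ℕ) : ℝ :=
  ∑ f ∈ (PF ν μ T).filter (fun f => alive x J f), wgt p f

variable {p ν μ x J}

lemma alive_iff (hJ : 0 < J) {T : ℕ} (f : Fin T → ℤ) :
    alive x J f ↔ ¬ ((J : ℤ) ≤ sv x J f) ∧ ¬ (sv x J f ≤ 0) := by
  constructor
  · intro h
    have h1 := alive_sv x J f h
    have h2 := h T le_rfl
    rw [h1]
    omega
  · intro h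
    by_contra hc
    rcases exit_of_not_alive x J f hc with h' | h' <;> tauto

lemma bot_not_top (hJ : 0 < J) {T : ℕ} (f : Fin T → ℤ) (h : sv x J f ≤ 0) :
    ¬ ((J : ℤ) ≤ sv x J f) := by
  intro hc
  have : (0:ℤ) < J := by exact_mod_cast hJ
  omega

lemma sum_split (hJ : 0 < J) (T : ℕ) (F : (Fin T → ℤ) → ℝ) :
    ∑ f ∈ PF ν μ T, F f =
      (∑ f ∈ (PF ν μ T).filter (fun f => (J : ℤ) ≤ sv x J f), F f) +
      (∑ f ∈ (PF ν μ T).filter (fun f => sv x J f ≤ 0), F f) +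
      (∑ f ∈ (PF ν μ T).filter (fun f => alive x J f), F f) := by
  rw [← Finset.sum_filter_add_sum_filter_not (PF ν μ T) (fun f => (J : ℤ) ≤ sv x J f) F]
  rw [← Finset.sum_filter_add_sum_filter_not
    ((PF ν μ T).filter (fun f => ¬ ((J : ℤ) ≤ sv x J f))) (fun f => sv x J f ≤ 0) F]
  rw [Finset.filter_filter, Finset.filter_filter]
  have e1 : ((PF ν μ T).filter fun f => ¬(J : ℤ) ≤ sv x J f ∧ sv x J f ≤ 0)
      = (PF ν μ T).filter (fun f => sv x J f ≤ 0) := by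
    apply Finset.filter_congr
    intro f _
    simp only [iff_iff_implies_and_implies]
    constructor
    · intro h; exact h.2
    · intro h; exact ⟨bot_not_top hJ f h, h⟩
  have e2 : ((PF ν μ T).filter fun f => ¬(J : ℤ) ≤ sv x J f ∧ ¬sv x J f ≤ 0)
      = (PF ν μ T).filter (fun f => alive x J f) := by
    apply Finset.filter_congr
    intro f _
    rw [alive_iff hJ f]
  rw [e1, e2, add_assoc]

lemma partition (hp0 : ∀ k, 0 ≤ p k) (hsum : ∑ k ∈ SS ν μ, p k = 1) (hJ : 0 < J) (T : ℕ) :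
    qwt p ν μ x J T + bwt p ν μ x J T + awt p ν μ x J T = 1 := by
  rw [qwt, bwt, awt, ← sum_split hJ T (wgt p), sum_wgt p hsum]

lemma wgt_nonneg (hp0 : ∀ k, 0 ≤ p k) {T : ℕ} (f : Fin T → ℤ) : 0 ≤ wgt p f :=
  Finset.prod_nonneg fun _ _ => hp0 _

lemma qwt_nonneg (hp0 : ∀ k, 0 ≤ p k) (T : ℕ) : 0 ≤ qwt p ν μ x J T :=
  Finset.sum_nonneg fun f _ => wgt_nonneg hp0 f

lemma bwt_nonneg (hp0 : ∀ k, 0 ≤ p k) (T : ℕ) : 0 ≤ bwt p ν μ x J T :=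
  Finset.sum_nonneg fun f _ => wgt_nonneg hp0 f

lemma awt_nonneg (hp0 : ∀ k, 0 ≤ p k) (T : ℕ) : 0 ≤ awt p ν μ x J T :=
  Finset.sum_nonneg fun f _ => wgt_nonneg hp0 f

/-- the two master inequalities obtained from the martingale identity -/
lemma master (hp0 : ∀ k, 0 ≤ p k) (hsum : ∑ k ∈ SS ν μ, p k = 1) {α : ℝ} (hα : 1 < α)
    (hchar : ∑ k ∈ SS ν μ, α ^ k * p k = 1) (hx : 0 < x) (hxJ : x < J) (T : ℕ) :
    qwt p ν μ x J T * α ^ (J : ℤ) + bwt p ν μ x J T * α ^ (1 - (ν : ℤ))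
        + awt p ν μ x J T * α ≤ α ^ (x : ℤ) ∧
      α ^ (x : ℤ) ≤ qwt p ν μ x J T * α ^ ((J : ℤ) - 1 + μ) + bwt p ν μ x J T
        + awt p ν μ x J T * α ^ ((J : ℤ) - 1) := by
  have hα0 : (0:ℝ) < α := lt_trans one_pos hα
  have hα1 : (1:ℝ) ≤ α := le_of_lt hα
  have hJ : 0 < J := lt_trans hx hxJ
  have hM := MW_eq (x := x) (J := J) hα0 hsum hchar T
  rw [sum_split hJ T (fun f => wgt p f * α ^ sv x J f)] at hM
  -- bounds for each of the three sums
  have htop_lb : qwt p ν μ x J T * α ^ (J : ℤ) ≤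
      ∑ f ∈ (PF ν μ T).filter (fun f => (J : ℤ) ≤ sv x J f), wgt p f * α ^ sv x J f := by
    rw [qwt, Finset.sum_mul]
    apply Finset.sum_le_sum
    intro f hf
    have hs := (Finset.mem_filter.mp hf).2
    exact mul_le_mul_of_nonneg_left (zpow_le_zpow_right₀ hα1 hs) (wgt_nonneg hp0 f)
  have htop_ub : (∑ f ∈ (PF ν μ T).filter (fun f => (J : ℤ) ≤ sv x J f),
      wgt p f * α ^ sv x J f) ≤ qwt p ν μ x J T * α ^ ((J : ℤ) - 1 + μ) := by
    rw [qwt, Finset.sum_mul]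
    apply Finset.sum_le_sum
    intro f hf
    have hm := (Finset.mem_filter.mp hf).1
    have hs := (Finset.mem_filter.mp hf).2
    exact mul_le_mul_of_nonneg_left
      (zpow_le_zpow_right₀ hα1 (sv_top_bounds hx hxJ hm hs)) (wgt_nonneg hp0 f)
  have hbot_lb : bwt p ν μ x J T * α ^ (1 - (ν : ℤ)) ≤
      ∑ f ∈ (PF ν μ T).filter (fun f => sv x J f ≤ 0), wgt p f * α ^ sv x J f := by
    rw [bwt, Finset.sum_mul]
    apply Finset.sum_le_sum
    intro f hf
    have hm := (Finset.mem_filter.mp hf).1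
    have hs := (Finset.mem_filter.mp hf).2
    exact mul_le_mul_of_nonneg_left
      (zpow_le_zpow_right₀ hα1 (sv_bot_bounds hx hxJ hm hs)) (wgt_nonneg hp0 f)
  have hbot_ub : (∑ f ∈ (PF ν μ T).filter (fun f => sv x J f ≤ 0),
      wgt p f * α ^ sv x J f) ≤ bwt p ν μ x J T := by
    rw [bwt]
    apply Finset.sum_le_sum
    intro f hf
    have hs := (Finset.mem_filter.mp hf).2
    have : α ^ sv x J f ≤ α ^ (0 : ℤ) := zpow_le_zpow_right₀ hα1 hs
    rw [zpow_zero] at this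
    calc wgt p f * α ^ sv x J f ≤ wgt p f * 1 :=
          mul_le_mul_of_nonneg_left this (wgt_nonneg hp0 f)
      _ = wgt p f := mul_one _
  have hmid : ∀ f ∈ (PF ν μ T).filter (fun f => alive x J f),
      (1:ℤ) ≤ sv x J f ∧ sv x J f ≤ (J : ℤ) - 1 := by
    intro f hf
    have hs := (Finset.mem_filter.mp hf).2
    have h1 := alive_sv x J f hs
    have h2 := hs T le_rfl
    rw [h1]
    omega
  have hmid_lb : awt p ν μ x J T * α ≤
      ∑ f ∈ (PF ν μ T).filter (fun f => alive x J f), wgt p f * α ^ sv x J f := by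
    rw [awt, Finset.sum_mul]
    apply Finset.sum_le_sum
    intro f hf
    have : α ^ (1:ℤ) ≤ α ^ sv x J f := zpow_le_zpow_right₀ hα1 (hmid f hf).1
    rw [zpow_one] at this
    exact mul_le_mul_of_nonneg_left this (wgt_nonneg hp0 f)
  have hmid_ub : (∑ f ∈ (PF ν μ T).filter (fun f => alive x J f),
      wgt p f * α ^ sv x J f) ≤ awt p ν μ x J T * α ^ ((J : ℤ) - 1) := by
    rw [awt, Finset.sum_mul]
    apply Finset.sum_le_sum
    intro f hf
    exact mul_le_mul_of_nonneg_left
      (zpow_le_zpow_right₀ hα1 (hmid f hf).2) (wgt_nonneg hp0 f)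
  constructor
  · rw [← hM]
    exact add_le_add (add_le_add htop_lb hbot_lb) hmid_lb
  · rw [← hM]
    exact add_le_add (add_le_add htop_ub hbot_ub) hmid_ub

end Parts

section Decay

open scoped Classical

variable {p : ℤ → ℝ} {ν μ x J : ℕ}

/-- restriction of a path to a shorter horizon -/
def res (T j : ℕ) (f : Fin (T + j) → ℤ) : Fin T → ℤ :=
  fun i => f (Fin.castLE (Nat.le_add_right T j) i)

lemma ext_res {T j : ℕ} (f : Fin (T + j) → ℤ) {s : ℕ} (hs : s < T) :
    ext (res T j f) s = ext f s := by
  have hs' : s < T + j := by omega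
  unfold ext res
  rw [dif_pos hs, dif_pos hs']
  congr 1

lemma posf_res (x : ℕ) {T j : ℕ} (f : Fin (T + j) → ℤ) {t : ℕ} (ht : t ≤ T) :
    posf x (res T j f) t = posf x f t := by
  unfold posf
  have h1 : min t T = t := by omega
  have h2 : min t (T + j) = t := by omega
  rw [h1, h2]
  congr 1
  exact Finset.sum_congr rfl fun s hs => ext_res f (by
    have := Finset.mem_range.mp hs; omega)

lemma alive_res {T j : ℕ} {f : Fin (T + j) → ℤ} (h : alive x J f) :
    alive x J (res T j f) := by
  intro t ht
  rw [posf_res x f ht]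
  exact h t (by omega)

lemma res_zero {T : ℕ} (f : Fin (T + 0) → ℤ) : res T 0 f = f := by
  funext i
  unfold res
  congr 1

lemma res_snoc {T j : ℕ} (g : Fin (T + j) → ℤ) (k : ℤ) :
    res T (j + 1) (Fin.snoc g k : Fin (T + j + 1) → ℤ) = res T j g := by
  funext i
  unfold res
  have : (Fin.castLE (Nat.le_add_right T (j+1)) i : Fin (T + j + 1)) =
      Fin.castSucc (Fin.castLE (Nat.le_add_right T j) i) := by
    apply Fin.ext; simp
  rw [this, Fin.snoc_castSucc]

lemma sum_res (hsum : ∑ k ∈ SS ν μ, p k = 1) (T : ℕ) (Q : (Fin T → ℤ) → ℝ) :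
    ∀ j, ∑ f ∈ PF ν μ (T + j), wgt p f * Q (res T j f)
      = ∑ g ∈ PF ν μ T, wgt p g * Q g := by
  intro j
  induction j with
  | zero => exact Finset.sum_congr rfl fun f _ => by rw [res_zero]
  | succ j ih =>
    show ∑ f ∈ PF ν μ ((T + j) + 1), wgt p f * Q (res T (j+1) f)
      = ∑ g ∈ PF ν μ T, wgt p g * Q g
    rw [sum_PF_succ]
    have : ∀ g ∈ PF ν μ (T + j), ∑ k ∈ SS ν μ,
        wgt p (Fin.snoc g k : Fin (T + j + 1) → ℤ) *
          Q (res T (j+1) (Fin.snoc g k : Fin (T + j + 1) → ℤ))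
        = wgt p g * Q (res T j g) := by
      intro g _
      have : ∀ k ∈ SS ν μ, wgt p (Fin.snoc g k : Fin (T + j + 1) → ℤ) *
          Q (res T (j+1) (Fin.snoc g k : Fin (T + j + 1) → ℤ))
          = wgt p g * Q (res T j g) * p k := by
        intro k _
        rw [wgt_snoc, res_snoc]
        ring
      rw [Finset.sum_congr rfl this, ← Finset.mul_sum, hsum, mul_one]
    rw [Finset.sum_congr rfl this, ih]

/-- all increments from time `T` on are equal to `μ` -/
def tailμ (μ T : ℕ) {n : ℕ} (f : Fin n → ℤ) : Prop :=
  ∀ i : Fin n, T ≤ (i : ℕ) → f i = (μ : ℤ)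

lemma tailμ_snoc {T j : ℕ} (g : Fin (T + j) → ℤ) (k : ℤ) :
    tailμ μ T (Fin.snoc g k : Fin (T + j + 1) → ℤ) ↔ k = (μ : ℤ) ∧ tailμ μ T g := by
  constructor
  · intro h
    constructor
    · have := h (Fin.last (T + j)) (by simp)
      rwa [Fin.snoc_last] at this
    · intro i hi
      have := h (Fin.castSucc i) (by simpa using hi)
      rwa [Fin.snoc_castSucc] at this
  · rintro ⟨hk, hg⟩ i
    refine Fin.lastCases ?_ ?_ i
    · intro _; rw [Fin.snoc_last]; exact hk
    · intro i' hi'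
      rw [Fin.snoc_castSucc]
      exact hg i' (by simpa using hi')

lemma sum_res_tail (hsum : ∑ k ∈ SS ν μ, p k = 1) (hν : 0 < ν) (T : ℕ)
    (Q : (Fin T → ℤ) → ℝ) :
    ∀ j, ∑ f ∈ PF ν μ (T + j),
        wgt p f * (if tailμ μ T f then (1:ℝ) else 0) * Q (res T j f)
      = p μ ^ j * ∑ g ∈ PF ν μ T, wgt p g * Q g := by
  intro j
  induction j with
  | zero =>
    rw [pow_zero, one_mul]
    apply Finset.sum_congr rfl
    intro f _
    rw [res_zero]
    have : tailμ μ T f := by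
      intro i hi
      exact absurd hi (by have := i.isLt; omega)
    rw [if_pos this, mul_one]
  | succ j ih =>
    show ∑ f ∈ PF ν μ ((T + j) + 1),
        wgt p f * (if tailμ μ T f then (1:ℝ) else 0) * Q (res T (j+1) f)
      = p μ ^ (j+1) * ∑ g ∈ PF ν μ T, wgt p g * Q g
    rw [sum_PF_succ]
    have hμSS : (μ : ℤ) ∈ SS ν μ := by
      rw [SS, Finset.mem_Icc]
      omega
    have hkey : ∀ g ∈ PF ν μ (T + j), ∑ k ∈ SS ν μ,
        wgt p (Fin.snoc g k : Fin (T + j + 1) → ℤ) *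
          (if tailμ μ T (Fin.snoc g k : Fin (T + j + 1) → ℤ) then (1:ℝ) else 0) *
          Q (res T (j+1) (Fin.snoc g k : Fin (T + j + 1) → ℤ))
        = p μ * (wgt p g * (if tailμ μ T g then (1:ℝ) else 0) * Q (res T j g)) := by
      intro g _
      have heach : ∀ k ∈ SS ν μ, wgt p (Fin.snoc g k : Fin (T + j + 1) → ℤ) *
          (if tailμ μ T (Fin.snoc g k : Fin (T + j + 1) → ℤ) then (1:ℝ) else 0) *
          Q (res T (j+1) (Fin.snoc g k : Fin (T + j + 1) → ℤ))
          = (if k = (μ:ℤ) then p k else 0) *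
            (wgt p g * (if tailμ μ T g then (1:ℝ) else 0) * Q (res T j g)) := by
        intro k _
        rw [wgt_snoc, res_snoc]
        by_cases hk : k = (μ : ℤ)
        · by_cases hg' : tailμ μ T g
          · rw [if_pos ((tailμ_snoc g k).mpr ⟨hk, hg'⟩), if_pos hg', if_pos hk]
            ring
          · rw [if_neg (by rw [tailμ_snoc]; tauto), if_neg hg', if_pos hk]
            ring
        · rw [if_neg (by rw [tailμ_snoc]; tauto), if_neg hk]
          ring
      rw [Finset.sum_congr rfl heach, ← Finset.sum_mul]
      rw [Finset.sum_ite_eq' (SS ν μ) (μ : ℤ) p]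
      rw [if_pos hμSS]
    rw [Finset.sum_congr rfl hkey, ← Finset.mul_sum, ih, pow_succ]
    ring

end Decay

section Decay2

open scoped Classical

variable {p : ℤ → ℝ} {ν μ x J : ℕ}

lemma awt_zero (hp0 : ∀ k, 0 ≤ p k) (hsum : ∑ k ∈ SS ν μ, p k = 1)
    (hx : 0 < x) (hxJ : x < J) : awt p ν μ x J 0 = 1 := by
  rw [awt]
  have : ∀ f ∈ PF ν μ 0, alive x J f := by
    intro f _ t ht
    have ht0 : t = 0 := by omega
    rw [ht0, posf_zero]
    constructor
    · exact_mod_cast hx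
    · exact_mod_cast hxJ
  rw [Finset.filter_true_of_mem this]
  exact sum_wgt p hsum 0

lemma alive_not_tail (hμ : 0 < μ) (hx : 0 < x) {T : ℕ} {f : Fin (T + J) → ℤ}
    (hal : alive x J f) (ht : tailμ μ T f) : False := by
  have hgrow : ∀ i ≤ J, posf x f T + i ≤ posf x f (T + i) := by
    intro i hi
    induction i with
    | zero => simp
    | succ i ih =>
      have hi' : i ≤ J := by omega
      have hlt : T + i < T + J := by omega
      have hstep : posf x f (T + i + 1) = posf x f (T + i) + ext f (T + i) :=
        posf_succ x f hlt
      have hext : ext f (T + i) = (μ : ℤ) := by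
        unfold ext
        rw [dif_pos hlt]
        exact ht ⟨T + i, hlt⟩ (by simp)
      have hμ' : (1 : ℤ) ≤ μ := by exact_mod_cast hμ
      have := ih hi'
      rw [show T + (i+1) = T + i + 1 from rfl, hstep]
      omega
  have h1 : 0 < posf x f T := (hal T (by omega)).1
  have h2 : posf x f (T + J) < J := (hal (T + J) le_rfl).2
  have h3 := hgrow J le_rfl
  omega

lemma awt_decay (hp0 : ∀ k, 0 ≤ p k) (hsum : ∑ k ∈ SS ν μ, p k = 1)
    (hν : 0 < ν) (hμ : 0 < μ) (hx : 0 < x) (hxJ : x < J) (T : ℕ) :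
    awt p ν μ x J (T + J) ≤ (1 - p μ ^ J) * awt p ν μ x J T := by
  have haw : awt p ν μ x J (T + J) = ∑ f ∈ PF ν μ (T + J),
      wgt p f * (if alive x J f then (1:ℝ) else 0) := by
    rw [awt, Finset.sum_filter]
    apply Finset.sum_congr rfl
    intro f _
    split <;> ring
  have hle : awt p ν μ x J (T + J) ≤
      (∑ f ∈ PF ν μ (T + J), wgt p f * (if alive x J (res T J f) then (1:ℝ) else 0))
      - ∑ f ∈ PF ν μ (T + J), wgt p f * (if tailμ μ T f then (1:ℝ) else 0) *
          (if alive x J (res T J f) then (1:ℝ) else 0) := by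
    rw [haw, ← Finset.sum_sub_distrib]
    apply Finset.sum_le_sum
    intro f _
    have hw := wgt_nonneg hp0 f
    by_cases hal : alive x J f
    · have h1 : alive x J (res T J f) := alive_res hal
      have h2 : ¬ tailμ μ T f := fun ht => alive_not_tail hμ hx hal ht
      rw [if_pos hal, if_pos h1, if_neg h2]
      ring_nf
      simp
    · rw [if_neg hal]
      by_cases h1 : alive x J (res T J f) <;> by_cases h2 : tailμ μ T f <;>
        simp [h1, h2, hw]
  have e1 : (∑ f ∈ PF ν μ (T + J), wgt p f * (if alive x J (res T J f) then (1:ℝ) else 0))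
      = awt p ν μ x J T := by
    rw [sum_res hsum T (fun g => if alive x J g then (1:ℝ) else 0) J, awt,
      Finset.sum_filter]
    apply Finset.sum_congr rfl
    intro f _
    split <;> ring
  have e2 : (∑ f ∈ PF ν μ (T + J), wgt p f * (if tailμ μ T f then (1:ℝ) else 0) *
        (if alive x J (res T J f) then (1:ℝ) else 0))
      = p μ ^ J * awt p ν μ x J T := by
    rw [sum_res_tail hsum hν T (fun g => if alive x J g then (1:ℝ) else 0) J, awt,
      Finset.sum_filter]
    congr 1
    apply Finset.sum_congr rfl
    intro f _
    split <;> ring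
  rw [e1, e2] at hle
  calc awt p ν μ x J (T + J) ≤ awt p ν μ x J T - p μ ^ J * awt p ν μ x J T := hle
    _ = (1 - p μ ^ J) * awt p ν μ x J T := by ring

lemma awt_pow (hp0 : ∀ k, 0 ≤ p k) (hp1 : ∀ k, p k ≤ 1)
    (hsum : ∑ k ∈ SS ν μ, p k = 1)
    (hν : 0 < ν) (hμ : 0 < μ) (hx : 0 < x) (hxJ : x < J) (n : ℕ) :
    awt p ν μ x J (n * J) ≤ (1 - p μ ^ J) ^ n := by
  induction n with
  | zero =>
    rw [zero_mul, awt_zero hp0 hsum hx hxJ, pow_zero]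
  | succ n ih =>
    have h1 : (n + 1) * J = n * J + J := by ring
    rw [h1, pow_succ]
    calc awt p ν μ x J (n * J + J) ≤ (1 - p μ ^ J) * awt p ν μ x J (n * J) :=
          awt_decay hp0 hsum hν hμ hx hxJ (n * J)
      _ ≤ (1 - p μ ^ J) * (1 - p μ ^ J) ^ n := by
          apply mul_le_mul_of_nonneg_left ih
          have : p μ ^ J ≤ 1 := pow_le_one₀ (hp0 _) (hp1 _)
          linarith
      _ = (1 - p μ ^ J) ^ n * (1 - p μ ^ J) := by ring

end Decay2

end GRB






section Bridge

open GRB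

variable {Ω : Type*} [MeasurableSpace Ω] (P : Measure Ω) [IsProbabilityMeasure P]
  (p : ℤ → ℝ) (ν μ : ℕ) (ξ : ℕ → Ω → ℤ)

/-- probability of a cylinder set is the weight of the path -/
lemma meas_cyl (hp0 : ∀ k, 0 ≤ p k)
    (hindep : iIndepFun ξ P)
    (hdist : ∀ t, ∀ k : ℤ, P {ω | ξ t ω = k} = ENNReal.ofReal (p k))
    (T : ℕ) (f : Fin T → ℤ) :
    P {ω | ∀ i : Fin T, ξ i ω = f i} = ENNReal.ofReal (wgt p f) := by
  classical
  set sets : ℕ → Set ℤ := fun n => if h : n < T then {f ⟨n, h⟩} else Set.univ with hsets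
  have hmeas' : ∀ i, i ∈ Finset.range T → MeasurableSet (sets i) := by
    intro i _
    by_cases h : i < T
    · simp only [hsets, dif_pos h]
      exact measurableSet_singleton _
    · simp only [hsets, dif_neg h]
      exact MeasurableSet.univ
  have hkey := hindep.measure_inter_preimage_eq_mul (Finset.range T) hmeas'
  have hset : (⋂ i ∈ Finset.range T, ξ i ⁻¹' sets i) = {ω | ∀ i : Fin T, ξ i ω = f i} := by
    ext ω
    simp only [Set.mem_iInter, Set.mem_preimage, Finset.mem_range, Set.mem_setOf_eq]
    constructor
    · intro h i
      have := h i.val i.isLt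
      simpa only [hsets, dif_pos i.isLt, Set.mem_singleton_iff, Fin.eta] using this
    · intro h n hn
      simp only [hsets, dif_pos hn, Set.mem_singleton_iff]
      exact h ⟨n, hn⟩
  rw [hset] at hkey
  rw [hkey]
  have hterm : ∀ i ∈ Finset.range T, P (ξ i ⁻¹' sets i) = ENNReal.ofReal (p (ext f i)) := by
    intro i hi
    have hiT : i < T := Finset.mem_range.mp hi
    have h1 : ξ i ⁻¹' sets i = {ω | ξ i ω = f ⟨i, hiT⟩} := by
      ext ω
      simp [hsets, dif_pos hiT]
    rw [h1, hdist]
    congr 1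
    unfold GRB.ext
    rw [dif_pos hiT]
  rw [Finset.prod_congr rfl hterm, ← ENNReal.ofReal_prod_of_nonneg (fun i _ => hp0 _)]
  congr 1
  rw [← Fin.prod_univ_eq_prod_range (fun s => p (GRB.ext f s)) T]
  apply Finset.prod_congr rfl
  intro i _
  congr 1
  unfold GRB.ext
  rw [dif_pos i.isLt, Fin.eta]

/-- a.s. all increments lie in the support -/
lemma meas_allS (hp0 : ∀ k, 0 ≤ p k)
    (hmeas : ∀ t, Measurable (ξ t))
    (hsum : ∑ k ∈ SS ν μ, p k = 1)
    (hdist : ∀ t, ∀ k : ℤ, P {ω | ξ t ω = k} = ENNReal.ofReal (p k))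
    (T : ℕ) :
    P {ω | ∀ i : Fin T, ξ i ω ∈ SS ν μ}ᶜ = 0 := by
  classical
  have hone : ∀ i : ℕ, P {ω | ξ i ω ∈ SS ν μ} = 1 := by
    intro i
    have hU : {ω | ξ i ω ∈ SS ν μ} = ⋃ k ∈ (SS ν μ : Finset ℤ), {ω | ξ i ω = k} := by
      ext ω
      simp [Set.mem_iUnion]
    rw [hU, measure_biUnion_finset]
    · have : ∀ k ∈ SS ν μ, P {ω | ξ i ω = k} = ENNReal.ofReal (p k) := fun k _ => hdist i k
      rw [Finset.sum_congr rfl this, ← ENNReal.ofReal_sum_of_nonneg (fun k _ => hp0 _), hsum,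
        ENNReal.ofReal_one]
    · intro a _ b _ hab
      simp only [Function.onFun, Set.disjoint_left]
      intro ω ha hb
      simp only [Set.mem_setOf_eq] at ha hb
      exact hab (ha ▸ hb ▸ rfl)
    · intro k _
      exact (hmeas i) (measurableSet_singleton k)
  have hcompl : ∀ i : ℕ, P {ω | ξ i ω ∈ SS ν μ}ᶜ = 0 := by
    intro i
    have hm : MeasurableSet {ω | ξ i ω ∈ SS ν μ} := by
      have : {ω | ξ i ω ∈ SS ν μ} = ξ i ⁻¹' (SS ν μ : Set ℤ) := rfl
      rw [this]
      exact (hmeas i) (Finset.measurableSet _)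
    rw [measure_compl hm (measure_ne_top P _), hone i, measure_univ, tsub_self]
  have hsub : {ω | ∀ i : Fin T, ξ i ω ∈ SS ν μ}ᶜ ⊆ ⋃ i : Fin T, {ω | ξ i.val ω ∈ SS ν μ}ᶜ := by
    intro ω hω
    simp only [Set.mem_compl_iff, Set.mem_setOf_eq, not_forall] at hω
    obtain ⟨i, hi⟩ := hω
    exact Set.mem_iUnion.mpr ⟨i, hi⟩
  refine le_antisymm (le_trans (measure_mono hsub) ?_) zero_le
  rw [show (0 : ENNReal) = ∑' i : Fin T, (0 : ENNReal) by simp]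
  refine le_trans (measure_iUnion_le _) ?_
  exact ENNReal.tsum_le_tsum fun i => le_of_eq (hcompl i.val)

end Bridge

section Bridge2

open GRB

open scoped Classical

variable {Ω : Type*} [MeasurableSpace Ω] (P : Measure Ω) [IsProbabilityMeasure P]
  (p : ℤ → ℝ) (ν μ : ℕ) (ξ : ℕ → Ω → ℤ)

lemma walk_eq_posf (x : ℕ) {T : ℕ} (f : Fin T → ℤ) (ω : Ω)
    (hω : ∀ i : Fin T, ξ i ω = f i) {t : ℕ} (ht : t ≤ T) :
    walk ξ x t ω = posf x f t := by
  unfold walk posf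
  have h1 : min t T = t := by omega
  rw [h1]
  congr 1
  apply Finset.sum_congr rfl
  intro s hs
  have hsT : s < T := by have := Finset.mem_range.mp hs; omega
  unfold GRB.ext
  rw [dif_pos hsT]
  exact hω ⟨s, hsT⟩

lemma meas_event (hp0 : ∀ k, 0 ≤ p k)
    (hmeas : ∀ t, Measurable (ξ t))
    (hindep : iIndepFun ξ P)
    (hsum : ∑ k ∈ SS ν μ, p k = 1)
    (hdist : ∀ t, ∀ k : ℤ, P {ω | ξ t ω = k} = ENNReal.ofReal (p k))
    (x J : ℕ) (hJ : 0 < J) (T : ℕ) :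
    P {ω | ∃ t ≤ T, (J : ℤ) ≤ walk ξ x t ω ∧ ∀ s ≤ t, 0 < walk ξ x s ω}
      = ENNReal.ofReal (qwt p ν μ x J T) := by
  set E : Set Ω := {ω | ∃ t ≤ T, (J : ℤ) ≤ walk ξ x t ω ∧ ∀ s ≤ t, 0 < walk ξ x s ω} with hE
  set A : Set Ω := {ω | ∀ i : Fin T, ξ i ω ∈ SS ν μ} with hA
  set G : Finset (Fin T → ℤ) := (PF ν μ T).filter
    (fun f => ∃ t ≤ T, (J : ℤ) ≤ posf x f t ∧ ∀ s ≤ t, 0 < posf x f s) with hG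
  have hEA : E ∩ A = ⋃ f ∈ G, {ω | ∀ i : Fin T, ξ i ω = f i} := by
    ext ω
    simp only [Set.mem_inter_iff, Set.mem_iUnion, Set.mem_setOf_eq, exists_prop]
    constructor
    · rintro ⟨hEω, hAω⟩
      refine ⟨fun i => ξ i ω, ?_, fun i => rfl⟩
      rw [hG, Finset.mem_filter]
      constructor
      · rw [PF, Fintype.mem_piFinset]
        exact hAω
      · obtain ⟨t, htT, h1, h2⟩ := hEω
        refine ⟨t, htT, ?_, ?_⟩
        · rwa [← walk_eq_posf ξ x _ ω (fun i => rfl) htT]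
        · intro s hs
          rw [← walk_eq_posf ξ x _ ω (fun i => rfl) (le_trans hs htT)]
          exact h2 s hs
    · rintro ⟨f, hfG, hcyl⟩
      rw [hG, Finset.mem_filter] at hfG
      obtain ⟨hfPF, t, htT, h1, h2⟩ := hfG
      constructor
      · refine ⟨t, htT, ?_, ?_⟩
        · rwa [walk_eq_posf ξ x f ω hcyl htT]
        · intro s hs
          rw [walk_eq_posf ξ x f ω hcyl (le_trans hs htT)]
          exact h2 s hs
      · intro i
        rw [hcyl i]
        exact (Fintype.mem_piFinset.mp hfPF) i
  have hAc : P Aᶜ = 0 := meas_allS P p ν μ ξ hp0 hmeas hsum hdist T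
  have hPE : P E = P (E ∩ A) := by
    apply le_antisymm
    · calc P E ≤ P ((E ∩ A) ∪ Aᶜ) := measure_mono (by
            intro ω hω
            by_cases hωA : ω ∈ A
            · exact Or.inl ⟨hω, hωA⟩
            · exact Or.inr hωA)
        _ ≤ P (E ∩ A) + P Aᶜ := measure_union_le _ _
        _ = P (E ∩ A) := by rw [hAc, add_zero]
    · exact measure_mono Set.inter_subset_left
  have hdisj : (G : Set (Fin T → ℤ)).PairwiseDisjoint
      (fun f => {ω | ∀ i : Fin T, ξ i ω = f i}) := by
    intro f _ g _ hfg
    simp only [Function.onFun, Set.disjoint_left]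
    intro ω hf hg
    apply hfg
    funext i
    rw [← hf i, ← hg i]
  have hmcyl : ∀ f ∈ G, MeasurableSet {ω | ∀ i : Fin T, ξ i ω = f i} := by
    intro f _
    have : {ω | ∀ i : Fin T, ξ i ω = f i} = ⋂ i : Fin T, (ξ i) ⁻¹' {f i} := by
      ext ω; simp
    rw [this]
    exact MeasurableSet.iInter fun i => (hmeas i) (measurableSet_singleton _)
  rw [hPE, hEA, measure_biUnion_finset hdisj hmcyl]
  have hterm : ∀ f ∈ G, P {ω | ∀ i : Fin T, ξ i ω = f i} = ENNReal.ofReal (wgt p f) :=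
    fun f _ => meas_cyl P p ξ hp0 hindep hdist T f
  rw [Finset.sum_congr rfl hterm, ← ENNReal.ofReal_sum_of_nonneg
    (fun f _ => wgt_nonneg hp0 f)]
  congr 1
  rw [qwt, hG]
  apply Finset.sum_congr _ (fun _ _ => rfl)
  apply Finset.filter_congr
  intro f _
  constructor
  · intro h
    exact (top_iff x J hJ f).mpr h
  · intro h
    exact (top_iff x J hJ f).mp h

end Bridge2

section Final

open GRB

/-- shifting exponents: `(α^x - α^{1-ν}) α^{ν-1} = α^{x+ν-1} - 1` -/
lemma shift_eq {α : ℝ} (hα0 : 0 < α) (x ν : ℕ) (hx : 0 < x) :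
    (α ^ (x : ℤ) - α ^ (1 - (ν : ℤ))) * α ^ ((ν : ℤ) - 1) = α ^ (x + ν - 1) - 1 := by
  have hne : α ≠ 0 := ne_of_gt hα0
  rw [sub_mul, ← zpow_add₀ hne, ← zpow_add₀ hne]
  have h1 : (1 - (ν : ℤ)) + ((ν : ℤ) - 1) = 0 := by ring
  have h2 : (x : ℤ) + ((ν : ℤ) - 1) = ((x + ν - 1 : ℕ) : ℤ) := by
    push_cast [Nat.cast_sub (by omega : 1 ≤ x + ν)]
    ring
  rw [h1, h2, zpow_zero, zpow_natCast]

end Final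

set_option maxHeartbeats 2000000 in
/-- Feller's bounds for the generalized gambler's ruin problem: for a random walk with i.i.d.
increments of law `p` supported on `[-ν, μ]` with `p (-ν) > 0`, `p μ > 0` and negative mean,
letting `α > 1` be the unique `α ≠ 1` with `Σ_k α^k p(k) = 1`, the probability `φ(x, J)` of
hitting `≥ J` strictly before `≤ 0` satisfies
`(α^x − 1)/(α^{J+μ−1} − 1) ≤ φ(x,J) ≤ (α^{x+ν−1} − 1)/(α^{J+ν−1} − 1)`. -/
theorem gamblers_ruin_bounds {Ω : Type*} [MeasurableSpace Ω] (P : Measure Ω)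
    [IsProbabilityMeasure P]
    (p : ℤ → ℝ) (ν μ : ℕ) (hν : 0 < ν) (hμ : 0 < μ)
    (hp0 : ∀ k, 0 ≤ p k) (hp1 : ∀ k, p k ≤ 1)
    (hsupp : ∀ k : ℤ, (k < -(ν : ℤ) ∨ (μ : ℤ) < k) → p k = 0)
    (hsum : ∑ k ∈ Finset.Icc (-(ν : ℤ)) (μ : ℤ), p k = 1)
    (hpν : 0 < p (-(ν : ℤ))) (hpμ : 0 < p (μ : ℤ))
    (hmean : ∑ k ∈ Finset.Icc (-(ν : ℤ)) (μ : ℤ), (k : ℝ) * p k < 0)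
    (ξ : ℕ → Ω → ℤ) (hmeas : ∀ t, Measurable (ξ t))
    (hindep : iIndepFun ξ P)
    (hdist : ∀ t, ∀ k : ℤ, P {ω | ξ t ω = k} = ENNReal.ofReal (p k))
    (α : ℝ) (hα : 1 < α)
    (hchar : ∑ k ∈ Finset.Icc (-(ν : ℤ)) (μ : ℤ), α ^ k * p k = 1)
    (huniq : ∀ β : ℝ, 0 < β → β ≠ 1 →
      (∑ k ∈ Finset.Icc (-(ν : ℤ)) (μ : ℤ), β ^ k * p k = 1) → β = α)
    (x J : ℕ) (hx : 0 < x) (hxJ : x < J) :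
    (α ^ x - 1) / (α ^ (J + μ - 1) - 1) ≤ phi P ξ x J ∧
      phi P ξ x J ≤ (α ^ (x + ν - 1) - 1) / (α ^ (J + ν - 1) - 1) := by
  classical
  have hJ : 0 < J := lt_trans hx hxJ
  have hα0 : (0:ℝ) < α := lt_trans one_pos hα
  have hα1 : (1:ℝ) ≤ α := le_of_lt hα
  have hαne : α ≠ 0 := ne_of_gt hα0
  have hsum' : ∑ k ∈ GRB.SS ν μ, p k = 1 := hsum
  have hchar' : ∑ k ∈ GRB.SS ν μ, α ^ k * p k = 1 := hchar
  -- the increasing family of events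
  set E : ℕ → Set Ω := fun T =>
    {ω | ∃ t ≤ T, (J : ℤ) ≤ walk ξ x t ω ∧ ∀ s ≤ t, 0 < walk ξ x s ω} with hEdef
  have hPE : ∀ T, P (E T) = ENNReal.ofReal (GRB.qwt p ν μ x J T) := fun T =>
    meas_event P p ν μ ξ hp0 hmeas hindep hsum' hdist x J hJ T
  have hUnion : {ω | ∃ t : ℕ, (J : ℤ) ≤ walk ξ x t ω ∧ ∀ s ≤ t, 0 < walk ξ x s ω}
      = ⋃ T, E T := by
    ext ω
    simp only [Set.mem_setOf_eq, Set.mem_iUnion, hEdef]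
    constructor
    · rintro ⟨t, h1, h2⟩
      exact ⟨t, t, le_rfl, h1, h2⟩
    · rintro ⟨T, t, _, h1, h2⟩
      exact ⟨t, h1, h2⟩
  have hdir : Directed (· ⊆ ·) E := by
    have hmono : Monotone E := by
      intro m n hmn ω hω
      obtain ⟨t, ht, h1, h2⟩ := hω
      exact ⟨t, le_trans ht hmn, h1, h2⟩
    intro m n
    exact ⟨max m n, hmono (le_max_left m n), hmono (le_max_right m n)⟩
  have hPsup : P {ω | ∃ t : ℕ, (J : ℤ) ≤ walk ξ x t ω ∧ ∀ s ≤ t, 0 < walk ξ x s ω}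
      = ⨆ T, P (E T) := by rw [hUnion]; exact hdir.measure_iUnion
  -- abbreviations
  set q : ℕ → ℝ := fun T => GRB.qwt p ν μ x J T with hq
  set b : ℕ → ℝ := fun T => GRB.bwt p ν μ x J T with hb
  set a : ℕ → ℝ := fun T => GRB.awt p ν μ x J T with ha
  have hpart : ∀ T, q T + b T + a T = 1 := fun T => GRB.partition hp0 hsum' hJ T
  have hqnn : ∀ T, 0 ≤ q T := fun T => GRB.qwt_nonneg hp0 T
  have hbnn : ∀ T, 0 ≤ b T := fun T => GRB.bwt_nonneg hp0 T
  have hann : ∀ T, 0 ≤ a T := fun T => GRB.awt_nonneg hp0 T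
  have hmaster := fun T => GRB.master hp0 hsum' hα hchar' hx hxJ T
  -- phi as a supremum, and its comparison with each q T
  have hphile : ∀ T, q T ≤ phi P ξ x J := by
    intro T
    have h1 : ENNReal.ofReal (q T) ≤
        P {ω | ∃ t : ℕ, (J : ℤ) ≤ walk ξ x t ω ∧ ∀ s ≤ t, 0 < walk ξ x s ω} := by
      rw [← hPE T, hUnion]
      exact measure_mono (Set.subset_iUnion E T)
    have h2 := ENNReal.toReal_mono (measure_ne_top P _) h1
    rwa [ENNReal.toReal_ofReal (hqnn T)] at h2
  -- ====== upper bound ======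
  have hupper : phi P ξ x J ≤ (α ^ (x + ν - 1) - 1) / (α ^ (J + ν - 1) - 1) := by
    set U : ℝ := (α ^ (x + ν - 1) - 1) / (α ^ (J + ν - 1) - 1) with hU
    have hqU : ∀ T, q T ≤ U := by
      intro T
      have hm := (hmaster T).1
      have e1 : α ^ (1 - (ν:ℤ)) ≤ α := by
        have := zpow_le_zpow_right₀ hα1 (show (1 - (ν:ℤ)) ≤ 1 by omega)
        rwa [zpow_one] at this
      have e2 : a T * α ^ (1 - (ν:ℤ)) ≤ a T * α :=
        mul_le_mul_of_nonneg_left e1 (hann T)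
      have h1 : q T * α ^ (J:ℤ) + (1 - q T) * α ^ (1 - (ν:ℤ)) ≤ α ^ (x:ℤ) := by
        have hsub : b T + a T = 1 - q T := by linarith [hpart T]
        nlinarith [hm, e2]
      have hden : (0:ℝ) < α ^ (J:ℤ) - α ^ (1 - (ν:ℤ)) := by
        have e3 : α ^ (1 - (ν:ℤ)) ≤ α ^ (0:ℤ) :=
          zpow_le_zpow_right₀ hα1 (by omega)
        have e4 : α ^ (0:ℤ) < α ^ (J:ℤ) := by
          rw [zpow_zero, show ((J:ℤ)) = ((J:ℕ):ℤ) from rfl, zpow_natCast]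
          exact one_lt_pow₀ hα (by omega)
        linarith
      have h2 : q T ≤ (α ^ (x:ℤ) - α ^ (1 - (ν:ℤ))) / (α ^ (J:ℤ) - α ^ (1 - (ν:ℤ))) := by
        rw [le_div_iff₀ hden]
        nlinarith [h1]
      have hcpos : (0:ℝ) < α ^ ((ν:ℤ) - 1) := zpow_pos hα0 _
      have h3 : (α ^ (x:ℤ) - α ^ (1 - (ν:ℤ))) / (α ^ (J:ℤ) - α ^ (1 - (ν:ℤ))) = U := by
        rw [hU, ← mul_div_mul_right _ _ (ne_of_gt hcpos), shift_eq hα0 x ν hx,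
          shift_eq hα0 J ν hJ]
      rw [← h3]
      exact h2
    have hU0 : 0 ≤ U := by
      rw [hU]
      apply div_nonneg
      · have : (1:ℝ) ≤ α ^ (x + ν - 1) := one_le_pow₀ hα1
        linarith
      · have : (1:ℝ) ≤ α ^ (J + ν - 1) := one_le_pow₀ hα1
        linarith
    have h4 : P {ω | ∃ t : ℕ, (J : ℤ) ≤ walk ξ x t ω ∧ ∀ s ≤ t, 0 < walk ξ x s ω}
        ≤ ENNReal.ofReal U := by
      rw [hPsup]
      apply iSup_le
      intro T
      rw [hPE T]
      exact ENNReal.ofReal_le_ofReal (hqU T)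
    have h5 := ENNReal.toReal_mono ENNReal.ofReal_ne_top h4
    rwa [ENNReal.toReal_ofReal hU0] at h5
  -- ====== lower bound ======
  have hlower : (α ^ x - 1) / (α ^ (J + μ - 1) - 1) ≤ phi P ξ x J := by
    set D : ℝ := α ^ (J + μ - 1) - 1 with hD
    have hDpos : (0:ℝ) < D := by
      rw [hD]
      have : (1:ℝ) < α ^ (J + μ - 1) := one_lt_pow₀ hα (by omega)
      linarith
    set C : ℝ := (α ^ ((J:ℤ) - 1) - 1) / D with hC
    have hC0 : 0 ≤ C := by
      rw [hC]
      apply div_nonneg _ (le_of_lt hDpos)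
      have : (1:ℝ) ≤ α ^ ((J:ℤ) - 1) := one_le_zpow₀ hα1 (by omega)
      linarith
    set L : ℝ := (α ^ x - 1) / D with hL
    -- per-horizon lower bound on q T
    have hqL : ∀ T, L - a T * C ≤ q T := by
      intro T
      have hm : α ^ ((x:ℤ)) ≤ q T * α ^ ((J:ℤ) - 1 + μ) + b T + a T * α ^ ((J:ℤ) - 1) :=
        (hmaster T).2
      have hDeq : α ^ ((J:ℤ) - 1 + μ) = α ^ (J + μ - 1) := by
        rw [show ((J:ℤ) - 1 + μ) = ((J + μ - 1 : ℕ) : ℤ) by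
          push_cast [Nat.cast_sub (by omega : 1 ≤ J + μ)]; ring, zpow_natCast]
      have hxeq : α ^ ((x:ℤ)) = α ^ x := by rw [zpow_natCast]
      rw [hDeq, hxeq] at hm
      have hbsub : b T = 1 - q T - a T := by linarith [hpart T]
      rw [hbsub] at hm
      -- hm : α ^ x ≤ q T * (α^(J+μ-1)) + (1 - q T - a T) + a T * α^(J-1)
      have h6 : α ^ x - 1 ≤ q T * D + a T * (α ^ ((J:ℤ) - 1) - 1) := by
        rw [hD]; nlinarith [hm]
      have h7 : a T * (α ^ ((J:ℤ) - 1) - 1) = a T * C * D := by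
        rw [hC]; field_simp
      rw [h7] at h6
      rw [hL, sub_le_iff_le_add, div_le_iff₀ hDpos]
      nlinarith [h6]
    -- decay of a T along multiples of J
    set c : ℝ := p (μ:ℤ) ^ J with hc
    have hc0 : 0 < c := pow_pos hpμ J
    have hc1 : c ≤ 1 := pow_le_one₀ (hp0 _) (hp1 _)
    have hdecay : ∀ n : ℕ, a (n * J) ≤ (1 - c) ^ n := fun n =>
      GRB.awt_pow hp0 hp1 hsum' hν hμ hx hxJ n
    have htend : Filter.Tendsto (fun n : ℕ => (1 - c) ^ n) Filter.atTop (nhds 0) :=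
      tendsto_pow_atTop_nhds_zero_of_lt_one (by linarith) (by linarith)
    -- conclude
    by_contra hcon
    push_neg at hcon
    set ε : ℝ := (L - phi P ξ x J) / 2 with hε
    have hε0 : 0 < ε := by rw [hε]; linarith [hcon]
    have hev : ∀ᶠ n in Filter.atTop, (1 - c) ^ n < ε / (C + 1) :=
      htend.eventually (gt_mem_nhds (by positivity))
    obtain ⟨n, hn⟩ := hev.exists
    have h8 : a (n * J) * C ≤ ε := by
      have h9 : a (n * J) * C ≤ (1 - c) ^ n * C :=
        mul_le_mul_of_nonneg_right (hdecay n) hC0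
      have h10 : (1 - c) ^ n * C ≤ (ε / (C + 1)) * (C + 1) := by
        have : (1 - c) ^ n * C ≤ (ε / (C + 1)) * C :=
          mul_le_mul_of_nonneg_right (le_of_lt hn) hC0
        have h11 : (ε / (C + 1)) * C ≤ (ε / (C + 1)) * (C + 1) := by
          apply mul_le_mul_of_nonneg_left (by linarith) (by positivity)
        linarith
      have h12 : (ε / (C + 1)) * (C + 1) = ε := by field_simp
      linarith
    have h13 := hqL (n * J)
    have h14 := hphile (n * J)
    -- L - ε ≤ q (n*J) ≤ phi, but phi = L - 2ε
    have : L - ε ≤ phi P ξ x J := by linarith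
    rw [hε] at this
    linarith
  exact ⟨hlower, hupper⟩
end

section
/- Let (X_t)_{t≥0} be a random walk on ℤ with i.i.d. increments distributed according to a finitely supported probability distribution p : ℤ → [0,1] with p(−ν) > 0, p(μ) > 0 for positive integers ν, μ, p(k) = 0 for k outside [−ν, μ], and strictly negative mean. Let α* > 1 be the unique α ≠ 1 solving Σ_k α^k p(k) = 1, and let φ(x,J) be the probability that the walk started at x reaches a value ≥ J strictly before reaching a value ≤ 0. Then for every fixed integer x ≥ 1 and every δ > 0 there is a constant C such that for all n ≥ 2 with ⌈δ log n⌉ > x, one has φ(x, ⌈δ log n⌉) ≤ C · n^{−δ log α*}, where log denotes the natural logarithm. -/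
open MeasureTheory ProbabilityTheory

lemma grj_ofReal_zpow {α : ℝ} (hα : 0 < α) (k : ℤ) :
    ENNReal.ofReal α ^ k = ENNReal.ofReal (α ^ k) := by
  cases k with
  | ofNat n => simp [ENNReal.ofReal_pow hα.le]
  | negSucc n =>
      simp [zpow_negSucc, ENNReal.ofReal_inv_of_pos (pow_pos hα _),
        ENNReal.ofReal_pow hα.le]

lemma grj_moment {Ω : Type*} [MeasurableSpace Ω] (P : Measure Ω) [IsProbabilityMeasure P]
    (p : ℤ → ℝ) (ν μ : ℕ) (hp0 : ∀ k, 0 ≤ p k)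
    (X : Ω → ℤ) (hX : Measurable X)
    (hd : ∀ k : ℤ, P {ω | X ω = k} = ENNReal.ofReal (p k))
    (hae : ∀ᵐ ω ∂P, X ω ∈ Finset.Icc (-(ν : ℤ)) (μ : ℤ))
    {α : ℝ} (hα : 0 < α)
    (hchar : ∑ k ∈ Finset.Icc (-(ν : ℤ)) (μ : ℤ), α ^ k * p k = 1) :
    ∫⁻ ω, ENNReal.ofReal α ^ X ω ∂P = 1 := by
  classical
  set A := ENNReal.ofReal α with hA
  have hstep : (fun ω => A ^ X ω) =ᵐ[P]
      (fun ω => ∑ k ∈ Finset.Icc (-(ν : ℤ)) (μ : ℤ),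
        Set.indicator {ω | X ω = k} (fun _ => A ^ k) ω) := by
    filter_upwards [hae] with ω hω
    simp only [Set.indicator_apply, Set.mem_setOf_eq]
    rw [Finset.sum_ite_eq (Finset.Icc (-(ν : ℤ)) (μ : ℤ)) (X ω) (fun k => A ^ k), if_pos hω]
  rw [lintegral_congr_ae hstep, lintegral_finset_sum]
  · have : ∀ k ∈ Finset.Icc (-(ν : ℤ)) (μ : ℤ),
        (∫⁻ ω, Set.indicator {ω | X ω = k} (fun _ => A ^ k) ω ∂P)
          = ENNReal.ofReal (α ^ k * p k) := by
      intro k _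
      have hms : MeasurableSet {ω | X ω = k} := hX (measurableSet_singleton k)
      rw [lintegral_indicator_const hms, hd k,
        grj_ofReal_zpow hα, ← ENNReal.ofReal_mul (zpow_nonneg hα.le _)]
    rw [Finset.sum_congr rfl this, ← ENNReal.ofReal_sum_of_nonneg
      (fun k _ => mul_nonneg (zpow_nonneg hα.le _) (hp0 k)), hchar, ENNReal.ofReal_one]
  · exact fun k _ => (measurable_const.indicator (hX (measurableSet_singleton k)) : Measurable _)



lemma grj_block {Ω : Type*} [MeasurableSpace Ω] (P : Measure Ω) [IsProbabilityMeasure P]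
    (ξ : ℕ → Ω → ℤ) (hmeas : ∀ t, Measurable (ξ t))
    (hindep : ProbabilityTheory.iIndepFun ξ P)
    (A : ENNReal) (hA0 : A ≠ 0) (hAtop : A ≠ ⊤)
    (hmom : ∀ s, ∫⁻ ω, A ^ ξ s ω ∂P = 1) :
    ∀ F : Finset ℕ, ∫⁻ ω, A ^ (∑ s ∈ F, ξ s ω) ∂P = 1 := by
  classical
  intro F
  induction F using Finset.induction_on with
  | empty => simp
  | @insert a F ha ih =>
    have hLR : IndepFun (fun ω (i : ({a} : Finset ℕ)) => ξ i ω)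
        (fun ω (i : (F : Finset ℕ)) => ξ i ω) P :=
      hindep.indepFun_finset {a} F (Finset.disjoint_singleton_left.mpr ha) hmeas
    set φ : ({x // x ∈ ({a} : Finset ℕ)} → ℤ) → ENNReal :=
      fun v => A ^ (v ⟨a, Finset.mem_singleton_self a⟩) with hφdef
    set ψ : ({x // x ∈ F} → ℤ) → ENNReal :=
      fun v => A ^ (∑ i ∈ F.attach, v i) with hψdef
    have hInd : IndepFun (fun ω => A ^ ξ a ω) (fun ω => A ^ (∑ s ∈ F, ξ s ω)) P := by
      have h := hLR.comp (measurable_of_countable φ) (measurable_of_countable ψ)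
      have e1 : (φ ∘ fun ω (i : ({a} : Finset ℕ)) => ξ i ω) = fun ω => A ^ ξ a ω := rfl
      have e2 : (ψ ∘ fun ω (i : (F : Finset ℕ)) => ξ i ω)
          = fun ω => A ^ (∑ s ∈ F, ξ s ω) := by
        funext ω
        simp only [Function.comp_apply, hψdef]
        rw [Finset.sum_attach F (fun j => ξ j ω)]
      rwa [e1, e2] at h
    have hmG : Measurable (fun ω => A ^ (∑ s ∈ F, ξ s ω)) :=
      (measurable_of_countable (fun k : ℤ => A ^ k)).comp
        (Finset.measurable_sum F (fun i _ => hmeas i))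
    have hmF : Measurable (fun ω => A ^ ξ a ω) :=
      (measurable_of_countable (fun k : ℤ => A ^ k)).comp (hmeas a)
    have key := lintegral_mul_eq_lintegral_mul_lintegral_of_indepFun''
      hmF.aemeasurable hmG.aemeasurable hInd
    have : (fun ω => A ^ (∑ s ∈ insert a F, ξ s ω))
        = fun ω => (A ^ ξ a ω) * (A ^ (∑ s ∈ F, ξ s ω)) := by
      funext ω
      rw [Finset.sum_insert ha, ENNReal.zpow_add hA0 hAtop]
    rw [this]
    rw [key, hmom a, ih, mul_one]


/-- The event that the walk first reaches level `≥ J` at time `t`, having stayed positive. -/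
def grjE {Ω : Type*} (ξ : ℕ → Ω → ℤ) (x J : ℕ) (t : ℕ) : Set Ω :=
  {ω | (J : ℤ) ≤ walk ξ x t ω ∧ (∀ s < t, walk ξ x s ω < (J : ℤ)) ∧
    ∀ s ≤ t, 0 < walk ξ x s ω}

lemma grj_walk_measurable {Ω : Type*} [MeasurableSpace Ω] {ξ : ℕ → Ω → ℤ}
    (hmeas : ∀ t, Measurable (ξ t)) (x t : ℕ) : Measurable (walk ξ x t) := by
  unfold walk
  exact measurable_const.add (Finset.measurable_sum _ (fun i _ => hmeas i))

lemma grjE_measurable {Ω : Type*} [MeasurableSpace Ω] {ξ : ℕ → Ω → ℤ}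
    (hmeas : ∀ t, Measurable (ξ t)) (x J t : ℕ) : MeasurableSet (grjE ξ x J t) := by
  have h : grjE ξ x J t = {ω | (J : ℤ) ≤ walk ξ x t ω} ∩
      ((⋂ s ∈ Set.Iio t, {ω | walk ξ x s ω < (J : ℤ)}) ∩
        ⋂ s ∈ Set.Iic t, {ω | 0 < walk ξ x s ω}) := by
    ext ω
    simp [grjE, Set.mem_iInter, and_assoc]
  rw [h]
  refine MeasurableSet.inter ?_ (MeasurableSet.inter ?_ ?_)
  · exact (grj_walk_measurable hmeas x t)
      ((Set.to_countable {z : ℤ | (J : ℤ) ≤ z}).measurableSet)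
  · exact MeasurableSet.biInter (Set.to_countable _)
      (fun s _ => (grj_walk_measurable hmeas x s)
        ((Set.to_countable {z : ℤ | z < (J : ℤ)}).measurableSet))
  · exact MeasurableSet.biInter (Set.to_countable _)
      (fun s _ => (grj_walk_measurable hmeas x s)
        ((Set.to_countable {z : ℤ | 0 < z}).measurableSet))

lemma grj_key {Ω : Type*} [MeasurableSpace Ω] (P : Measure Ω) [IsProbabilityMeasure P]
    (ξ : ℕ → Ω → ℤ) (hmeas : ∀ t, Measurable (ξ t))
    (hindep : ProbabilityTheory.iIndepFun ξ P)
    (α : ℝ) (hα : 1 < α)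
    (hmom : ∀ s, ∫⁻ ω, ENNReal.ofReal α ^ ξ s ω ∂P = 1)
    (x J : ℕ) :
    P {ω | ∃ t : ℕ, (J : ℤ) ≤ walk ξ x t ω ∧ ∀ s ≤ t, 0 < walk ξ x s ω}
      ≤ ENNReal.ofReal α ^ ((x : ℤ) - (J : ℤ)) := by
  classical
  set A := ENNReal.ofReal α with hAdef
  have hA0 : A ≠ 0 := (ENNReal.ofReal_pos.mpr (by linarith)).ne'
  have hAtop : A ≠ ⊤ := ENNReal.ofReal_ne_top
  have hA1 : 1 ≤ A := by
    rw [hAdef, ← ENNReal.ofReal_one]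
    exact ENNReal.ofReal_le_ofReal hα.le
  have hW : ∀ s, Measurable (walk ξ x s) := grj_walk_measurable hmeas x
  have hE : ∀ t, MeasurableSet (grjE ξ x J t) := grjE_measurable hmeas x J
  have hblock := grj_block P ξ hmeas hindep A hA0 hAtop hmom
  -- disjointness
  have hmono : ∀ {a b : ℕ}, a < b → Disjoint (grjE ξ x J a) (grjE ξ x J b) := by
    intro a b hab
    rw [Set.disjoint_left]
    rintro ω ⟨h1, -, -⟩ ⟨-, h2, -⟩
    exact absurd h1 (not_le.mpr (h2 a hab))
  have hdisj : Pairwise (Function.onFun Disjoint (grjE ξ x J)) := by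
    intro a b hab
    rcases hab.lt_or_gt with h | h
    · exact hmono h
    · exact (hmono h).symm
  -- the event is the disjoint union of the grjE's
  have hunion : {ω | ∃ t : ℕ, (J : ℤ) ≤ walk ξ x t ω ∧ ∀ s ≤ t, 0 < walk ξ x s ω}
      = ⋃ t, grjE ξ x J t := by
    ext ω
    simp only [Set.mem_setOf_eq, Set.mem_iUnion]
    constructor
    · rintro ⟨t, h1, h2⟩
      have hex : ∃ k, (J : ℤ) ≤ walk ξ x k ω := ⟨t, h1⟩
      exact ⟨Nat.find hex, Nat.find_spec hex,
        fun s hs => not_le.mp (Nat.find_min hex hs),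
        fun s hs => h2 s (hs.trans (Nat.find_min' hex h1))⟩
    · rintro ⟨t, h1, -, h3⟩
      exact ⟨t, h1, h3⟩
  -- key one-step estimate
  have step : ∀ t T : ℕ, t ≤ T →
      A ^ (J : ℤ) * P (grjE ξ x J t)
        ≤ ∫⁻ ω, Set.indicator (grjE ξ x J t) (fun ω => A ^ walk ξ x T ω) ω ∂P := by
    intro t T htT
    -- independence set-up
    set L : Ω → ({i // i ∈ Finset.range t} → ℤ) := fun ω i => ξ i ω with hLdef
    set R : Ω → ({i // i ∈ Finset.Ico t T} → ℤ) := fun ω i => ξ i ω with hRdef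
    have hLR : IndepFun L R P := by
      refine hindep.indepFun_finset _ _ (Finset.disjoint_left.mpr ?_) hmeas
      intro i hi hi'
      simp only [Finset.mem_range] at hi
      simp only [Finset.mem_Ico] at hi'
      omega
    set pw : ({i // i ∈ Finset.range t} → ℤ) → ℕ → ℤ :=
      fun v s => (x : ℤ) + ∑ i ∈ (Finset.range t).attach, (if (i : ℕ) < s then v i else 0)
      with hpwdef
    set φ : ({i // i ∈ Finset.range t} → ℤ) → ENNReal := fun v =>
      Set.indicator {v | (J : ℤ) ≤ pw v t ∧ (∀ s < t, pw v s < (J : ℤ)) ∧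
        ∀ s ≤ t, 0 < pw v s} (fun v => A ^ pw v t) v with hφdef
    set ψ : ({i // i ∈ Finset.Ico t T} → ℤ) → ENNReal :=
      fun v => A ^ (∑ i ∈ (Finset.Ico t T).attach, v i) with hψdef
    have hpw : ∀ ω, ∀ s ≤ t, pw (L ω) s = walk ξ x s ω := by
      intro ω s hs
      unfold walk
      simp only [hpwdef, hLdef]
      congr 1
      have hfil : (Finset.range t).filter (fun j => j < s) = Finset.range s := by
        ext j
        simp only [Finset.mem_filter, Finset.mem_range]
        omega
      rw [Finset.sum_attach (Finset.range t) (fun j => if j < s then ξ j ω else 0),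
        ← Finset.sum_filter, hfil]
    have hφL : ∀ ω, φ (L ω) = Set.indicator (grjE ξ x J t) (fun ω => A ^ walk ξ x t ω) ω := by
      intro ω
      have hmem : (L ω ∈ {v | (J : ℤ) ≤ pw v t ∧ (∀ s < t, pw v s < (J : ℤ)) ∧
          ∀ s ≤ t, 0 < pw v s}) ↔ ω ∈ grjE ξ x J t := by
        simp only [Set.mem_setOf_eq, grjE]
        rw [hpw ω t le_rfl]
        refine and_congr_right fun _ => and_congr ?_ ?_
        · exact forall₂_congr fun s hs => by rw [hpw ω s hs.le]
        · exact forall₂_congr fun s hs => by rw [hpw ω s hs]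
      by_cases h : ω ∈ grjE ξ x J t
      · rw [hφdef]
        simp only []
        rw [Set.indicator_of_mem (hmem.mpr h), Set.indicator_of_mem h, hpw ω t le_rfl]
      · rw [hφdef]
        simp only []
        rw [Set.indicator_of_notMem (fun hc => h (hmem.mp hc)), Set.indicator_of_notMem h]
    have hψR : ∀ ω, ψ (R ω) = A ^ (∑ s ∈ Finset.Ico t T, ξ s ω) := by
      intro ω
      simp only [hψdef, hRdef]
      rw [Finset.sum_attach (Finset.Ico t T) (fun j => ξ j ω)]
    have hInd : IndepFun (Set.indicator (grjE ξ x J t) (fun ω => A ^ walk ξ x t ω))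
        (fun ω => A ^ (∑ s ∈ Finset.Ico t T, ξ s ω)) P := by
      have h := hLR.comp (measurable_of_countable φ) (measurable_of_countable ψ)
      have e1 : (φ ∘ L) = Set.indicator (grjE ξ x J t) (fun ω => A ^ walk ξ x t ω) :=
        funext hφL
      have e2 : (ψ ∘ R) = fun ω => A ^ (∑ s ∈ Finset.Ico t T, ξ s ω) := funext hψR
      rwa [e1, e2] at h
    have hFmeas : Measurable (Set.indicator (grjE ξ x J t) (fun ω => A ^ walk ξ x t ω)) :=
      Measurable.indicator ((measurable_of_countable (fun k : ℤ => A ^ k)).comp (hW t)) (hE t)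
    have hGmeas : Measurable (fun ω => A ^ (∑ s ∈ Finset.Ico t T, ξ s ω)) :=
      (measurable_of_countable (fun k : ℤ => A ^ k)).comp
        (Finset.measurable_sum _ (fun i _ => hmeas i))
    have hprod := lintegral_mul_eq_lintegral_mul_lintegral_of_indepFun''
      hFmeas.aemeasurable hGmeas.aemeasurable hInd
    -- pointwise product identity
    have hpt : ∀ ω, Set.indicator (grjE ξ x J t) (fun ω => A ^ walk ξ x t ω) ω
        * A ^ (∑ s ∈ Finset.Ico t T, ξ s ω)
        = Set.indicator (grjE ξ x J t) (fun ω => A ^ walk ξ x T ω) ω := by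
      intro ω
      have hsplit : walk ξ x T ω = walk ξ x t ω + ∑ s ∈ Finset.Ico t T, ξ s ω := by
        unfold walk
        rw [add_assoc]
        congr 1
        simp only [Finset.range_eq_Ico]
        rw [Finset.sum_Ico_consecutive _ (Nat.zero_le t) htT]
      by_cases h : ω ∈ grjE ξ x J t
      · rw [Set.indicator_of_mem h, Set.indicator_of_mem h, hsplit,
          ENNReal.zpow_add hA0 hAtop]
      · rw [Set.indicator_of_notMem h, Set.indicator_of_notMem h, zero_mul]
    calc A ^ (J : ℤ) * P (grjE ξ x J t)
        = ∫⁻ ω in grjE ξ x J t, A ^ (J : ℤ) ∂P := (setLIntegral_const _ _).symm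
      _ ≤ ∫⁻ ω in grjE ξ x J t, A ^ walk ξ x t ω ∂P := by
          refine setLIntegral_mono ((measurable_of_countable (fun k : ℤ => A ^ k)).comp (hW t))
            (fun ω hω => ?_)
          exact ENNReal.zpow_le_of_le hA1 hω.1
      _ = ∫⁻ ω, Set.indicator (grjE ξ x J t) (fun ω => A ^ walk ξ x t ω) ω ∂P :=
          (lintegral_indicator (hE t) _).symm
      _ = (∫⁻ ω, Set.indicator (grjE ξ x J t) (fun ω => A ^ walk ξ x t ω) ω ∂P)
            * ∫⁻ ω, A ^ (∑ s ∈ Finset.Ico t T, ξ s ω) ∂P := by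
          rw [hblock (Finset.Ico t T), mul_one]
      _ = ∫⁻ ω, Set.indicator (grjE ξ x J t) (fun ω => A ^ walk ξ x t ω) ω
            * A ^ (∑ s ∈ Finset.Ico t T, ξ s ω) ∂P := hprod.symm
      _ = ∫⁻ ω, Set.indicator (grjE ξ x J t) (fun ω => A ^ walk ξ x T ω) ω ∂P := by
          exact lintegral_congr hpt
  -- sum over t < T
  have sumle : ∀ T : ℕ, ∑ t ∈ Finset.range T, A ^ (J : ℤ) * P (grjE ξ x J t) ≤ A ^ (x : ℤ) := by
    intro T
    have h1 : ∑ t ∈ Finset.range T, A ^ (J : ℤ) * P (grjE ξ x J t)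
        ≤ ∑ t ∈ Finset.range T,
            ∫⁻ ω, Set.indicator (grjE ξ x J t) (fun ω => A ^ walk ξ x T ω) ω ∂P :=
      Finset.sum_le_sum fun t ht => step t T (Finset.mem_range.mp ht).le
    have h2 : ∑ t ∈ Finset.range T,
          ∫⁻ ω, Set.indicator (grjE ξ x J t) (fun ω => A ^ walk ξ x T ω) ω ∂P
        = ∫⁻ ω in ⋃ t ∈ Finset.range T, grjE ξ x J t, A ^ walk ξ x T ω ∂P := by
      rw [lintegral_biUnion_finset (fun a _ b _ hab => hdisj hab) (fun t _ => hE t)]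
      exact Finset.sum_congr rfl fun t _ => lintegral_indicator (hE t) _
    have h3 : ∫⁻ ω in ⋃ t ∈ Finset.range T, grjE ξ x J t, A ^ walk ξ x T ω ∂P
        ≤ ∫⁻ ω, A ^ walk ξ x T ω ∂P := setLIntegral_le_lintegral _ _
    have h4 : ∫⁻ ω, A ^ walk ξ x T ω ∂P = A ^ (x : ℤ) := by
      have he : (fun ω => A ^ walk ξ x T ω)
          = fun ω => A ^ (x : ℤ) * A ^ (∑ s ∈ Finset.range T, ξ s ω) := by
        funext ω
        unfold walk
        rw [ENNReal.zpow_add hA0 hAtop]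
      have hm : Measurable fun ω => A ^ (∑ s ∈ Finset.range T, ξ s ω) :=
        (measurable_of_countable (fun k : ℤ => A ^ k)).comp
          (Finset.measurable_sum _ (fun i _ => hmeas i))
      rw [he, lintegral_const_mul _ hm, hblock, mul_one]
    calc ∑ t ∈ Finset.range T, A ^ (J : ℤ) * P (grjE ξ x J t)
        ≤ _ := h1
      _ = _ := h2
      _ ≤ _ := h3
      _ = _ := h4
  -- conclude
  have htsum : A ^ (J : ℤ) * P (⋃ t, grjE ξ x J t) ≤ A ^ (x : ℤ) := by
    rw [measure_iUnion hdisj hE, ENNReal.tsum_mul_left.symm]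
    rw [ENNReal.tsum_eq_iSup_sum]
    refine iSup_le fun s => ?_
    calc ∑ t ∈ s, A ^ (J : ℤ) * P (grjE ξ x J t)
        ≤ ∑ t ∈ Finset.range (s.sup id + 1), A ^ (J : ℤ) * P (grjE ξ x J t) := by
          refine Finset.sum_le_sum_of_subset fun t ht => Finset.mem_range.mpr ?_
          exact Nat.lt_succ_of_le (Finset.le_sup (f := id) ht)
      _ ≤ A ^ (x : ℤ) := sumle _
  rw [hunion]
  calc P (⋃ t, grjE ξ x J t)
      = (A ^ (-(J : ℤ)) * A ^ (J : ℤ)) * P (⋃ t, grjE ξ x J t) := by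
        rw [← ENNReal.zpow_add hA0 hAtop, neg_add_cancel, zpow_zero, one_mul]
    _ = A ^ (-(J : ℤ)) * (A ^ (J : ℤ) * P (⋃ t, grjE ξ x J t)) := by ring
    _ ≤ A ^ (-(J : ℤ)) * A ^ (x : ℤ) := mul_le_mul_right htsum _
    _ = A ^ ((x : ℤ) - (J : ℤ)) := by
        rw [← ENNReal.zpow_add hA0 hAtop]
        congr 1
        ring

/-- With jackpot level `J = ⌈δ log n⌉`, the probability of reaching the jackpot before ruin
for a negative-drift random walk is `O(n^{-δ log α*})`: for every fixed start `x ≥ 1` and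
`δ > 0` there is a constant `C` with `φ(x, ⌈δ log n⌉) ≤ C · n^{-δ log α*}` for all `n ≥ 2`
with `⌈δ log n⌉ > x`. -/
theorem gamblers_ruin_log_jackpot {Ω : Type*} [MeasurableSpace Ω] (P : Measure Ω)
    [IsProbabilityMeasure P]
    (p : ℤ → ℝ) (ν μ : ℕ) (hν : 0 < ν) (hμ : 0 < μ)
    (hp0 : ∀ k, 0 ≤ p k) (hp1 : ∀ k, p k ≤ 1)
    (hsupp : ∀ k : ℤ, (k < -(ν : ℤ) ∨ (μ : ℤ) < k) → p k = 0)
    (hsum : ∑ k ∈ Finset.Icc (-(ν : ℤ)) (μ : ℤ), p k = 1)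
    (hpν : 0 < p (-(ν : ℤ))) (hpμ : 0 < p (μ : ℤ))
    (hmean : ∑ k ∈ Finset.Icc (-(ν : ℤ)) (μ : ℤ), (k : ℝ) * p k < 0)
    (ξ : ℕ → Ω → ℤ) (hmeas : ∀ t, Measurable (ξ t))
    (hindep : ProbabilityTheory.iIndepFun ξ P)
    (hdist : ∀ t, ∀ k : ℤ, P {ω | ξ t ω = k} = ENNReal.ofReal (p k))
    (α : ℝ) (hα : 1 < α)
    (hchar : ∑ k ∈ Finset.Icc (-(ν : ℤ)) (μ : ℤ), α ^ k * p k = 1)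
    (huniq : ∀ β : ℝ, 0 < β → β ≠ 1 →
      (∑ k ∈ Finset.Icc (-(ν : ℤ)) (μ : ℤ), β ^ k * p k = 1) → β = α)
    (x : ℕ) (hx : 1 ≤ x) (δ : ℝ) (hδ : 0 < δ) :
    ∃ C : ℝ, ∀ n : ℕ, 2 ≤ n → x < ⌈δ * Real.log n⌉₊ →
      phi P ξ x ⌈δ * Real.log n⌉₊ ≤ C * (n : ℝ) ^ (-(δ * Real.log α)) := by
  classical
  have hα0 : (0 : ℝ) < α := lt_trans one_pos hα
  -- the increments lie a.s. in the support interval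
  have hae : ∀ t, ∀ᵐ ω ∂P, ξ t ω ∈ Finset.Icc (-(ν : ℤ)) (μ : ℤ) := by
    intro t
    have hmeask : ∀ k : ℤ, MeasurableSet {ω | ξ t ω = k} :=
      fun k => hmeas t (measurableSet_singleton k)
    have hset : {ω | ξ t ω ∈ Finset.Icc (-(ν : ℤ)) (μ : ℤ)}
        = ⋃ k ∈ (Finset.Icc (-(ν : ℤ)) (μ : ℤ)), {ω | ξ t ω = k} := by
      ext ω; simp
    have hdisjk : Set.PairwiseDisjoint (↑(Finset.Icc (-(ν : ℤ)) (μ : ℤ)))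
        (fun k => {ω | ξ t ω = k}) := by
      intro k _ l _ hkl
      rw [Function.onFun, Set.disjoint_left]
      rintro ω h1 h2
      exact hkl ((h1 : ξ t ω = k).symm.trans h2)
    have hms : MeasurableSet {ω | ξ t ω ∈ Finset.Icc (-(ν : ℤ)) (μ : ℤ)} := by
      rw [hset]
      exact (Finset.Icc _ _).measurableSet_biUnion (fun k _ => hmeask k)
    have h1 : P {ω | ξ t ω ∈ Finset.Icc (-(ν : ℤ)) (μ : ℤ)} = 1 := by
      rw [hset, measure_biUnion_finset hdisjk (fun k _ => hmeask k)]
      simp_rw [hdist t]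
      rw [← ENNReal.ofReal_sum_of_nonneg (fun k _ => hp0 k), hsum, ENNReal.ofReal_one]
    rw [ae_iff]
    have he : {ω | ¬ ξ t ω ∈ Finset.Icc (-(ν : ℤ)) (μ : ℤ)}
        = {ω | ξ t ω ∈ Finset.Icc (-(ν : ℤ)) (μ : ℤ)}ᶜ := rfl
    rw [he, measure_compl hms (measure_ne_top _ _), h1, measure_univ, tsub_self]
  have hmom : ∀ s, ∫⁻ ω, ENNReal.ofReal α ^ ξ s ω ∂P = 1 := fun s =>
    grj_moment P p ν μ hp0 (ξ s) (hmeas s) (hdist s) (hae s) hα0 hchar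
  refine ⟨α ^ x, ?_⟩
  intro n hn _
  set J := ⌈δ * Real.log n⌉₊ with hJdef
  have hkey := grj_key P ξ hmeas hindep α hα hmom x J
  have h2 : ENNReal.ofReal α ^ ((x : ℤ) - (J : ℤ))
      = ENNReal.ofReal (α ^ ((x : ℤ) - (J : ℤ))) := grj_ofReal_zpow hα0 _
  have hphi : phi P ξ x J ≤ α ^ ((x : ℤ) - (J : ℤ)) := by
    unfold phi
    exact ENNReal.toReal_le_of_le_ofReal (zpow_nonneg hα0.le _) (h2 ▸ hkey)
  refine hphi.trans ?_
  have hlogα : 0 < Real.log α := Real.log_pos hα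
  have hn0 : (0 : ℝ) < n := by
    have : (2 : ℝ) ≤ n := by exact_mod_cast hn
    linarith
  have hJge : δ * Real.log n ≤ (J : ℝ) := Nat.le_ceil _
  have e1 : α ^ ((x : ℤ) - (J : ℤ)) = α ^ x * (α ^ (J : ℕ))⁻¹ := by
    rw [zpow_sub₀ (ne_of_gt hα0), zpow_natCast, zpow_natCast, div_eq_mul_inv]
  rw [e1]
  refine mul_le_mul_of_nonneg_left ?_ (by positivity)
  have hL : Real.exp ((J : ℝ) * Real.log α) = α ^ (J : ℕ) := by
    rw [Real.exp_nat_mul, Real.exp_log hα0]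
  have hR : (n : ℝ) ^ (-(δ * Real.log α)) = Real.exp (Real.log n * (-(δ * Real.log α))) :=
    Real.rpow_def_of_pos hn0 _
  rw [hR, ← hL, ← Real.exp_neg, Real.exp_le_exp]
  nlinarith [mul_le_mul_of_nonneg_right hJge hlogα.le]
end
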